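/- arXiv:2304.13990 — 5 statements merged into one kernel-verified Lean document; each statement's English description precedes it below -/
import Mathlib

section
/- For the standard λ-symmetrized vectors f^λ_{ij} = C_λ(f_{ij}), the inner product ⟨f^λ_{ij}, f^λ_{rs}⟩ equals 0 if i ≠ r or if j and s are in different G-orbits, and equals (λ(1)/|G|) Σ_{g∈G_j} λ(gτ^{-1}) when i = r and s = τ(j). In particular ‖f^λ_{ij}‖² = λ(1)[λ, 1_{G_j}]/[G:G_j]. -/
open scoped Classical InnerProductSpace ComplexConjugate

noncomputable section

/-- The Cartesian product `×^m V` with the inner product `⟨z,w⟩ = Σ ⟨z_i, w_i⟩`. -/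
abbrev CartPow (V : Type*) [NormedAddCommGroup V] [InnerProductSpace ℂ V] (m : ℕ) :=
  PiLp 2 (fun _ : Fin m => V)

/-- The Cartesian permutation operator `Q(τ)(u₁,…,u_m) = (u_{τ⁻¹(1)},…,u_{τ⁻¹(m)})`. -/
def CartQ (V : Type*) [NormedAddCommGroup V] [InnerProductSpace ℂ V] (m : ℕ)
    (τ : Equiv.Perm (Fin m)) : CartPow V m →ₗ[ℂ] CartPow V m where
  toFun u := WithLp.toLp 2 (fun i => u (τ⁻¹ i))
  map_add' _ _ := rfl
  map_smul' _ _ := rfl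

/-- The Cartesian symmetrizer `C_χ = (χ(1)/|G|) Σ_{τ∈G} χ(τ) Q(τ)`. -/
def cartSym (V : Type*) [NormedAddCommGroup V] [InnerProductSpace ℂ V] (m : ℕ)
    (G : Subgroup (Equiv.Perm (Fin m))) (χ : ↥G → ℂ) :
    CartPow V m →ₗ[ℂ] CartPow V m :=
  (χ 1 / (Nat.card G : ℂ)) • ∑ τ : G, χ τ • CartQ V m (τ : Equiv.Perm (Fin m))

/-- `χ : H → ℂ` is the character of some irreducible (finite-dimensional, complex)
representation of `H`. -/
def IsIrredChar {H : Type} [Group H] (χ : H → ℂ) : Prop :=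
  ∃ W : FDRep ℂ H, CategoryTheory.Simple W ∧ χ = W.character

/-- The standard vectors `f_{ij} = (δ_{1j} f_i, …, δ_{mj} f_i)` in `×^m V`. -/
def stdVec {V : Type*} [NormedAddCommGroup V] [InnerProductSpace ℂ V] {n : ℕ}
    (f : Fin n → V) (m : ℕ) (i : Fin n) (j : Fin m) : CartPow V m :=
  WithLp.toLp 2 (fun l => if l = j then f i else 0)

/-- `[χ, 1_{G_j}] = (1/|G_j|) Σ_{g ∈ G_j} χ(g)`. -/
def charInnerTriv {m : ℕ} (G : Subgroup (Equiv.Perm (Fin m))) (χ : ↥G → ℂ)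
    (j : Fin m) : ℂ :=
  (Nat.card (MulAction.stabilizer G j) : ℂ)⁻¹ * ∑ g : MulAction.stabilizer G j, χ (g : ↥G)

/-- `V^χ(G)` has an orthogonal basis consisting of standard χ-symmetrized vectors. -/
def HasOBasis (V : Type*) [NormedAddCommGroup V] [InnerProductSpace ℂ V] {n m : ℕ}
    (f : Fin n → V) (G : Subgroup (Equiv.Perm (Fin m))) (χ : ↥G → ℂ) : Prop :=
  ∃ (k : ℕ) (b : Module.Basis (Fin k) ℂ (LinearMap.range (cartSym V m G χ))),
    (∀ p q : Fin k, p ≠ q → ⟪(b p : CartPow V m), (b q : CartPow V m)⟫_ℂ = 0) ∧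
    ∀ p, ∃ (r : Fin n) (j : Fin m), (b p : CartPow V m) = cartSym V m G χ (stdVec f m r j)

/-- The Ramanujan sum `c_n(q)`. -/
def ramanujanSum (n q : ℕ) : ℂ :=
  ∑ s ∈ (Finset.range n).filter (fun s => Nat.gcd s n = 1),
    Complex.exp (2 * Real.pi * Complex.I * q * s / n)

end

/-!
`C_χ` is an orthogonal projection. It is self-adjoint because `Q(τ)` is unitary with adjoint
`Q(τ⁻¹)` and `χ(τ⁻¹) = conj χ(τ)`, and it is idempotent because irreducible characters satisfy
`χ(1) Σ_σ χ(σ) χ(σ⁻¹τ) = |G| χ(τ)`. Hence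
`⟪C_χ f_ij, C_χ f_rs⟫ = ⟪f_ij, C_χ f_rs⟫ = δ_ir (χ(1)/|G|) Σ_{τ(s) = j} χ(τ)`, and the `τ` with
`τ(s) = j` form the coset `G_j σ⁻¹` when `s = σ(j)`, and do not exist when `s ∉ G j`.
-/

section Trace

open Module

variable {K M : Type*} [Field K] [AddCommGroup M] [Module K M] [FiniteDimensional K M]

theorem LinearMap.trace_pow_of_isNilpotent_sub_algebraMap {f : End K M} {μ : K}
    (hf : IsNilpotent (f - algebraMap K _ μ)) (p : ℕ) :
    trace K M (f ^ p) = μ ^ p * finrank K M := by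
  induction p with
  | zero => simp
  | succ p ih =>
    rw [pow_succ, End.mul_eq_comp,
      trace_comp_eq_mul_of_commute_of_isNilpotent μ ((Commute.refl f).pow_left p) hf, ih]
    ring

theorem Module.End.trace_pow_restrict_maxGenEigenspace (f : End K M) (μ : K) (p : ℕ)
    (h : Set.MapsTo (f ^ p) (f.maxGenEigenspace μ) (f.maxGenEigenspace μ)) :
    LinearMap.trace K _ ((f ^ p).restrict h) = μ ^ p * finrank K (f.maxGenEigenspace μ) := by
  have hf := f.mapsTo_maxGenEigenspace_of_comm (Commute.refl f) μ
  rw [← End.pow_restrict p hf h]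
  refine LinearMap.trace_pow_of_isNilpotent_sub_algebraMap ?_ p
  convert f.isNilpotent_restrict_maxGenEigenspace_sub_algebraMap μ
  ext
  simp [Module.algebraMap_end_eq_smul_id]
  rfl

/-- The eigenvalues of `A` are `k`-th roots of unity, so `μ ^ (k - 1) = μ⁻¹ = conj μ`. -/
theorem LinearMap.trace_pow_pred_eq_conj_trace {W : Type*} [AddCommGroup W] [Module ℂ W]
    [FiniteDimensional ℂ W] {A : End ℂ W} {k : ℕ} (hk : k ≠ 0) (hA : A ^ k = 1) :
    trace ℂ W (A ^ (k - 1)) = conj (trace ℂ W A) := by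
  have hInt : DirectSum.IsInternal A.maxGenEigenspace :=
    DirectSum.isInternal_submodule_of_iSupIndep_of_iSup_eq_top A.independent_maxGenEigenspace
      A.iSup_maxGenEigenspace_eq_top
  have hFin : {μ | A.maxGenEigenspace μ ≠ ⊥}.Finite :=
    WellFoundedGT.finite_ne_bot_of_iSupIndep A.independent_maxGenEigenspace
  have hmaps (p : ℕ) (μ : ℂ) :=
    A.mapsTo_maxGenEigenspace_of_comm ((Commute.refl A).pow_right p) μ
  have htrace (p : ℕ) : trace ℂ W (A ^ p) =
      ∑ μ ∈ hFin.toFinset, μ ^ p * finrank ℂ (A.maxGenEigenspace μ) := by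
    rw [trace_eq_sum_trace_restrict' hInt hFin (hmaps p)]
    simp only [A.trace_pow_restrict_maxGenEigenspace]
  have htrace_one := htrace 1
  rw [pow_one] at htrace_one
  rw [htrace, htrace_one, map_sum]
  refine Finset.sum_congr rfl fun μ _ => ?_
  by_cases hd : (finrank ℂ (A.maxGenEigenspace μ) : ℂ) = 0
  · simp [hd]
  have hμ : μ ^ k = 1 := by
    have h := A.trace_pow_restrict_maxGenEigenspace μ k (hmaps k μ)
    have h1 : (A ^ k).restrict (hmaps k μ) = 1 := by ext; simp [hA]
    rw [h1, trace_one] at h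
    exact (mul_eq_right₀ hd).mp h.symm
  have hinv : μ ^ (k - 1) = μ⁻¹ := by
    refine eq_inv_of_mul_eq_one_right ?_
    rw [← pow_succ', Nat.sub_add_cancel (Nat.one_le_iff_ne_zero.mpr hk), hμ]
  rw [pow_one, map_mul, map_natCast, hinv,
    Complex.inv_eq_conj (Complex.norm_eq_one_of_pow_eq_one hμ hk)]

end Trace

namespace FDRep

open CategoryTheory

variable {H : Type} [Group H]

theorem char_inv [Finite H] (V : FDRep ℂ H) (g : H) :
    V.character g⁻¹ = conj (V.character g) := by
  have hg : g⁻¹ = g ^ (orderOf g - 1) :=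
    (eq_inv_of_mul_eq_one_right (by
      rw [← pow_succ', Nat.sub_add_cancel (orderOf_pos g), pow_orderOf_eq_one])).symm
  rw [character, character, hg, map_pow]
  exact LinearMap.trace_pow_pred_eq_conj_trace (orderOf_pos g).ne'
    (by rw [← map_pow, pow_orderOf_eq_one, map_one])

theorem exists_eq_smul_one_of_forall_commute {k : Type} [Field k] [IsAlgClosed k]
    (V : FDRep k H) [Simple V] (L : Module.End k V) (hL : ∀ h, Commute (V.ρ h) L) :
    ∃ c : k, L = c • 1 := by
  let T : V ⟶ V := ⟨InducedCategory.homMk (ModuleCat.ofHom L), fun h => by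
    ext x
    exact (LinearMap.congr_fun (hL h) x).symm⟩
  obtain ⟨c, hc⟩ := endomorphism_simple_eq_smul_id k T
  exact ⟨c, congrArg (fun φ : V ⟶ V => φ.hom.hom.hom) hc.symm⟩

/-- `Σ_σ χ(σ) ρ(σ⁻¹)` commutes with `ρ`, so it is a scalar `c`; comparing traces against `ρ(t)`
gives `Σ_σ χ(σ) χ(σ⁻¹t) = c χ(t)`, and `t = 1` with the orthonormality of `χ` gives
`c χ(1) = |H|`. -/
theorem char_one_mul_sum_char_mul_char_inv_mul [Fintype H] (V : FDRep ℂ H) [Simple V] (t : H) :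
    V.character 1 * ∑ σ, V.character σ * V.character (σ⁻¹ * t) =
      Nat.card H * V.character t := by
  obtain ⟨c, hc⟩ := V.exists_eq_smul_one_of_forall_commute (∑ σ, V.character σ • V.ρ σ⁻¹)
    fun h => by
      simp only [Commute, SemiconjBy, Finset.mul_sum, Finset.sum_mul, mul_smul_comm,
        smul_mul_assoc, ← map_mul]
      exact Fintype.sum_equiv (MulAut.conj h).toEquiv _ _ fun σ => by simp [← mul_assoc]
  have hconv (t : H) : ∑ σ, V.character σ * V.character (σ⁻¹ * t) = c * V.character t := by
    simpa [Finset.sum_mul, character] using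
      congrArg (fun L => LinearMap.trace ℂ V (L * V.ρ t)) hc
  have horth : ∑ σ, V.character σ * V.character σ⁻¹ = Nat.card H := by
    have hH : (Nat.card H : ℂ) ≠ 0 := by simp [Nat.card_eq_fintype_card]
    have : Invertible (Nat.card H : ℂ) := invertibleOfNonzero hH
    have h := char_orthonormal V V
    rwa [if_pos ⟨Iso.refl V⟩, inv_mul_eq_one₀ hH, eq_comm] at h
  have hc1 := hconv 1
  simp only [mul_one, horth] at hc1
  rw [hconv, ← mul_assoc, mul_comm _ c, hc1]

end FDRep

namespace IsIrredChar

variable {H : Type} [Group H] {χ : H → ℂ}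

theorem apply_inv [Finite H] (hχ : IsIrredChar χ) (g : H) : χ g⁻¹ = conj (χ g) := by
  obtain ⟨V, _, rfl⟩ := hχ
  exact V.char_inv g

theorem apply_one_mul_sum_apply_mul_apply_inv_mul [Fintype H] (hχ : IsIrredChar χ) (t : H) :
    χ 1 * ∑ σ, χ σ * χ (σ⁻¹ * t) = Nat.card H * χ t := by
  obtain ⟨V, _, rfl⟩ := hχ
  exact V.char_one_mul_sum_char_mul_char_inv_mul t

end IsIrredChar

theorem MulAction.sum_filter_smul_smul_eq_sum_stabilizer {G α M : Type*} [Group G] [Fintype G]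
    [MulAction G α] [DecidableEq α] [AddCommMonoid M] (F : G → M) (a : α)
    [Fintype (stabilizer G a)] (τ : G) :
    ∑ σ with σ • τ • a = a, F σ = ∑ g : stabilizer G a, F (g * τ⁻¹) := by
  refine Finset.sum_bij' (fun σ hσ => ⟨σ * τ, by simpa [mul_smul] using hσ⟩)
    (fun g _ => g * τ⁻¹) ?_ ?_ ?_ ?_ ?_ <;> simp [mul_smul]

section Cartesian

variable {V : Type*} [NormedAddCommGroup V] [InnerProductSpace ℂ V] {n m : ℕ}

theorem cartQ_mul (σ τ : Equiv.Perm (Fin m)) :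
    CartQ V m (σ * τ) = CartQ V m σ * CartQ V m τ := rfl

theorem inner_cartQ_left (τ : Equiv.Perm (Fin m)) (u v : CartPow V m) :
    ⟪CartQ V m τ u, v⟫_ℂ = ⟪u, CartQ V m τ⁻¹ v⟫_ℂ := by
  simp only [PiLp.inner_apply, CartQ, LinearMap.coe_mk, AddHom.coe_mk, inv_inv]
  exact (Equiv.sum_comp τ _).symm.trans (by simp)

theorem cartQ_stdVec (f : Fin n → V) (σ : Equiv.Perm (Fin m)) (i : Fin n) (j : Fin m) :
    CartQ V m σ (stdVec f m i j) = stdVec f m i (σ j) := by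
  ext l
  simp [CartQ, stdVec, Equiv.eq_symm_apply, eq_comm]

theorem inner_stdVec {f : Fin n → V} (hf : Orthonormal ℂ f) (i r : Fin n) (a b : Fin m) :
    ⟪stdVec f m i a, stdVec f m r b⟫_ℂ = if i = r ∧ a = b then 1 else 0 := by
  rw [PiLp.inner_apply, Finset.sum_eq_single a (fun l _ hl => by simp [stdVec, hl]) (by simp)]
  by_cases hab : a = b <;> simp [stdVec, hab, orthonormal_iff_ite.mp hf]

variable {G : Subgroup (Equiv.Perm (Fin m))} {χ : ↥G → ℂ}

theorem inner_cartSym_left (hχ : IsIrredChar χ) (u v : CartPow V m) :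
    ⟪cartSym V m G χ u, v⟫_ℂ = ⟪u, cartSym V m G χ v⟫_ℂ := by
  have hχ1 : conj (χ 1 / Nat.card G) = χ 1 / Nat.card G := by
    rw [map_div₀, map_natCast, ← hχ.apply_inv, inv_one]
  simp only [cartSym, LinearMap.smul_apply, LinearMap.coe_sum, Finset.sum_apply,
    inner_smul_left, inner_smul_right, sum_inner, inner_sum, inner_cartQ_left, hχ1]
  congr 1
  exact Fintype.sum_equiv (Equiv.inv G) _ _ fun τ => by simp [← hχ.apply_inv]

theorem cartSym_mul_self (hχ : IsIrredChar χ) :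
    cartSym V m G χ * cartSym V m G χ = cartSym V m G χ := by
  set a := χ 1 / Nat.card G
  have hC : cartSym V m G χ = a • ∑ τ : G, χ τ • CartQ V m τ := rfl
  have hconv (ρ : G) : a * a * ∑ σ, χ σ * χ (σ⁻¹ * ρ) = a * χ ρ := by
    have hG : (Nat.card G : ℂ) ≠ 0 := by simp [Nat.card_eq_fintype_card]
    calc a * a * ∑ σ, χ σ * χ (σ⁻¹ * ρ)
        = a * (χ 1 * ∑ σ, χ σ * χ (σ⁻¹ * ρ)) / Nat.card G := by ring
      _ = a * χ ρ := by
        rw [hχ.apply_one_mul_sum_apply_mul_apply_inv_mul]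
        field_simp
  rw [hC]
  calc (a • ∑ τ : G, χ τ • CartQ V m τ) * (a • ∑ τ : G, χ τ • CartQ V m τ)
      = (a * a) • ∑ σ : G, ∑ τ : G, (χ σ * χ τ) • CartQ V m (σ * τ : G) := by
        simp only [smul_mul_smul_comm, Finset.sum_mul_sum, Subgroup.coe_mul, cartQ_mul]
    _ = (a * a) • ∑ ρ : G, (∑ σ, χ σ * χ (σ⁻¹ * ρ)) • CartQ V m ρ := by
        simp_rw [Finset.sum_smul]
        conv_rhs => rw [Finset.sum_comm]
        refine congrArg _ (Finset.sum_congr rfl fun σ _ => ?_)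
        exact Fintype.sum_equiv (Equiv.mulLeft σ) _ _ fun τ => by simp
    _ = a • ∑ τ : G, χ τ • CartQ V m τ := by
        rw [Finset.smul_sum, Finset.smul_sum]
        simp only [smul_smul, hconv]

theorem inner_cartSym_cartSym (hχ : IsIrredChar χ) (u v : CartPow V m) :
    ⟪cartSym V m G χ u, cartSym V m G χ v⟫_ℂ = ⟪u, cartSym V m G χ v⟫_ℂ := by
  rw [inner_cartSym_left hχ, ← Module.End.mul_apply, cartSym_mul_self hχ]

theorem inner_stdVec_cartSym_stdVec {f : Fin n → V} (hf : Orthonormal ℂ f) (i r : Fin n)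
    (j s : Fin m) :
    ⟪stdVec f m i j, cartSym V m G χ (stdVec f m r s)⟫_ℂ =
      if i = r then χ 1 / Nat.card G * ∑ τ : G with τ • s = j, χ τ else 0 := by
  simp only [cartSym, LinearMap.smul_apply, LinearMap.coe_sum, Finset.sum_apply,
    inner_smul_right, inner_sum, cartQ_stdVec, inner_stdVec hf]
  by_cases h : i = r <;>
    simp [h, Finset.sum_filter, Subgroup.smul_def, Equiv.Perm.smul_def, eq_comm]

end Cartesian

theorem inner_cartSym_stdVec_general
    (V : Type*) [NormedAddCommGroup V] [InnerProductSpace ℂ V]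
    {n m : ℕ} (f : OrthonormalBasis (Fin n) ℂ V)
    (G : Subgroup (Equiv.Perm (Fin m))) (χ : ↥G → ℂ) (hχ : IsIrredChar χ) :
    (∀ (i r : Fin n) (j s : Fin m), (i ≠ r ∨ s ∉ MulAction.orbit G j) →
      ⟪cartSym V m G χ (stdVec ⇑f m i j), cartSym V m G χ (stdVec ⇑f m r s)⟫_ℂ = 0) ∧
    (∀ (i : Fin n) (j : Fin m) (τ : ↥G),
      ⟪cartSym V m G χ (stdVec ⇑f m i j), cartSym V m G χ (stdVec ⇑f m i (τ • j))⟫_ℂ =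
        (χ 1 / (Nat.card G : ℂ)) * ∑ g : MulAction.stabilizer G j, χ ((g : ↥G) * τ⁻¹)) ∧
    (∀ (i : Fin n) (j : Fin m),
      (‖cartSym V m G χ (stdVec ⇑f m i j)‖ : ℂ) ^ 2 =
        χ 1 * charInnerTriv G χ j / ((MulAction.stabilizer G j).index : ℂ)) := by
  have hinner (i r : Fin n) (j s : Fin m) :
      ⟪cartSym V m G χ (stdVec f m i j), cartSym V m G χ (stdVec f m r s)⟫_ℂ =
        if i = r then χ 1 / Nat.card G * ∑ τ : G with τ • s = j, χ τ else 0 :=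
    (inner_cartSym_cartSym hχ _ _).trans (inner_stdVec_cartSym_stdVec f.orthonormal i r j s)
  have horbit (i : Fin n) (j : Fin m) (τ : G) :
      ⟪cartSym V m G χ (stdVec f m i j), cartSym V m G χ (stdVec f m i (τ • j))⟫_ℂ =
        χ 1 / Nat.card G * ∑ g : MulAction.stabilizer G j, χ (g * τ⁻¹) := by
    rw [hinner, if_pos rfl, MulAction.sum_filter_smul_smul_eq_sum_stabilizer]
  refine ⟨fun i r j s h => ?_, horbit, fun i j => ?_⟩
  · rw [hinner]
    rcases h with hir | hs
    · exact if_neg hir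
    · have hempty (τ : G) (hτ : τ ∈ ({τ | τ • s = j} : Finset G)) : χ τ = 0 :=
        absurd (MulAction.mem_orbit_symm.mp ⟨τ, (Finset.mem_filter.mp hτ).2⟩) hs
      rw [Finset.sum_eq_zero hempty, mul_zero, ite_self]
  · have h := horbit i j 1
    rw [one_smul] at h
    refine (inner_self_eq_norm_sq_to_K (cartSym V m G χ (stdVec f m i j))).symm.trans ?_
    rw [h, charInnerTriv, ← Subgroup.index_mul_card]
    simp only [inv_one, mul_one, Nat.cast_mul]
    field_simp

/-- inner products of standard `χ`-symmetrized vectors, and the norm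
formula `‖f^χ_{ij}‖² = χ(1)·[χ, 1_{G_j}]/[G : G_j]`. -/
theorem inner_cartSym_stdVec
    (V : Type*) [NormedAddCommGroup V] [InnerProductSpace ℂ V] [FiniteDimensional ℂ V]
    {n m : ℕ} (f : OrthonormalBasis (Fin n) ℂ V)
    (G : Subgroup (Equiv.Perm (Fin m))) (χ : ↥G → ℂ) (hχ : IsIrredChar χ) :
    (∀ (i r : Fin n) (j s : Fin m), (i ≠ r ∨ s ∉ MulAction.orbit G j) →
      ⟪cartSym V m G χ (stdVec ⇑f m i j), cartSym V m G χ (stdVec ⇑f m r s)⟫_ℂ = 0) ∧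
    (∀ (i : Fin n) (j : Fin m) (τ : ↥G),
      ⟪cartSym V m G χ (stdVec ⇑f m i j), cartSym V m G χ (stdVec ⇑f m i (τ • j))⟫_ℂ =
        (χ 1 / (Nat.card G : ℂ)) * ∑ g : MulAction.stabilizer G j, χ ((g : ↥G) * τ⁻¹)) ∧
    (∀ (i : Fin n) (j : Fin m),
      (‖cartSym V m G χ (stdVec ⇑f m i j)‖ : ℂ) ^ 2 =
        χ 1 * charInnerTriv G χ j / ((MulAction.stabilizer G j).index : ℂ)) :=
  inner_cartSym_stdVec_general V f G χ hχ
end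

section
/- For every 1 ≤ i ≤ n and every j with [λ, 1_{G_j}] ≠ 0, the cyclic subspace V^λ_{ij} = span{f^λ_{iσ(j)} : σ ∈ G} has dimension λ(1)·[λ, 1_{G_j}]. -/
/-! The vectors `f_{il}` with `l` in the orbit `G·j` are linearly independent and are permuted by
the `Q(τ)` exactly as `G` permutes the orbit, so they span a copy of the permutation module
`ℂ[G·j]`, and the cyclic subspace is the image of `C_χ` on it. By Schur's lemma `C_χ` is
idempotent, so that dimension is the trace of `C_χ` on `ℂ[G·j]`, namely
`χ(1)/|G| · Σ_τ χ(τ) · #Fix(τ)`. The permutation character of the orbit is induced from the trivial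
character of `G_j`, so by Frobenius reciprocity this is `χ(1) · [χ, 1_{G_j}]`. -/

open scoped Classical InnerProductSpace ComplexConjugate

open CategoryTheory Module

namespace FDRep

variable {k H : Type*} [Field k] [IsAlgClosed k] [Group H] (W : FDRep k H) [Simple W]

theorem exists_eq_smul_id_of_commute (A : W →ₗ[k] W) (hA : ∀ g : H, Commute (W.ρ g) A) :
    ∃ c : k, A = c • LinearMap.id := by
  let F : W ⟶ W := ⟨InducedCategory.homMk (ModuleCat.ofHom A),
    fun g => by ext x; exact (LinearMap.congr_fun (hA g) x).symm⟩
  obtain ⟨c, hc⟩ := endomorphism_simple_eq_smul_id k F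
  exact ⟨c, (congr_arg (fun φ : W ⟶ W => φ.hom.hom.hom) hc).symm⟩

omit [IsAlgClosed k] in
theorem finrank_ne_zero_of_simple : finrank k W ≠ 0 := fun h => by
  have : Subsingleton W := finrank_zero_iff.mp h
  exact id_nonzero W (Action.hom_ext _ _ (by ext x; exact Subsingleton.elim _ _))

variable [Fintype H] [CharZero k]

theorem sum_char_mul_char_inv : ∑ g : H, W.character g * W.character g⁻¹ = Nat.card H := by
  have hH : (Nat.card H : k) ≠ 0 := Nat.cast_ne_zero.mpr Nat.card_pos.ne'
  have : Invertible (Nat.card H : k) := invertibleOfNonzero hH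
  have h := char_orthonormal W W
  rw [if_pos ⟨Iso.refl W⟩, inv_mul_eq_one₀ hH] at h
  exact h.symm

/-- By Schur, `∑ χ(g) ρ(g⁻¹)` is a scalar, which is read off from its trace. -/
theorem char_one_mul_sum_char_mul_char (g : H) :
    W.character 1 * ∑ τ : H, W.character τ * W.character (τ⁻¹ * g) =
      Nat.card H * W.character g := by
  set A : W →ₗ[k] W := ∑ τ : H, W.character τ • W.ρ τ⁻¹
  have hA : ∀ h : H, Commute (W.ρ h) A := fun h => by
    simp only [Commute, SemiconjBy, A, Finset.mul_sum, Finset.sum_mul]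
    refine Fintype.sum_equiv (MulAut.conj h).toEquiv _ _ fun τ => ?_
    simp only [MulEquiv.toEquiv_eq_coe, MulEquiv.coe_toEquiv, MulAut.conj_apply, char_conj,
      mul_smul_comm, smul_mul_assoc, ← map_mul]
    congr 2
    group
  obtain ⟨c, hc⟩ := exists_eq_smul_id_of_commute W A hA
  have trace_A_mul : ∀ g : H, ∑ τ : H, W.character τ * W.character (τ⁻¹ * g) = c * W.character g :=
    fun g => by
    have h := congr_arg (fun B => LinearMap.trace k W (B * W.ρ g)) hc
    simpa [A, Finset.sum_mul, character, smul_mul_assoc, ← Module.End.one_eq_id, ← map_mul]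
      using h
  have hc1 : c * W.character 1 = Nat.card H := by
    simpa [sum_char_mul_char_inv W] using (trace_A_mul 1).symm
  rw [trace_A_mul, ← hc1]
  ring

end FDRep

section Symmetrizer

variable {k H A : Type*} [Field k] [Group H] [Fintype H] [Semiring A] [Algebra k A]

noncomputable def charSymmetrizer (χ : H → k) (ρ : H →* A) : A :=
  (χ 1 / Nat.card H) • ∑ τ : H, χ τ • ρ τ

theorem sum_smul_mul_sum_smul (χ : H → k) (ρ : H →* A) :
    (∑ τ : H, χ τ • ρ τ) * (∑ τ : H, χ τ • ρ τ) =
      ∑ g : H, (∑ σ : H, χ σ * χ (σ⁻¹ * g)) • ρ g := by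
  simp_rw [Finset.sum_mul_sum, Finset.sum_smul]
  refine (Finset.sum_congr rfl fun σ _ => ?_).trans Finset.sum_comm
  refine Fintype.sum_equiv (Equiv.mulLeft σ) _ _ fun τ => ?_
  simp only [Equiv.coe_mulLeft, inv_mul_cancel_left, smul_mul_smul_comm, ← map_mul]

theorem isIdempotentElem_charSymmetrizer [IsAlgClosed k] [CharZero k] (W : FDRep k H) [Simple W]
    (ρ : H →* A) : IsIdempotentElem (charSymmetrizer W.character ρ) := by
  have hd : W.character 1 ≠ 0 := by simp [FDRep.finrank_ne_zero_of_simple]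
  have hN : (Nat.card H : k) ≠ 0 := Nat.cast_ne_zero.mpr Nat.card_pos.ne'
  have hSS : W.character 1 • ((∑ τ : H, W.character τ • ρ τ) * ∑ τ : H, W.character τ • ρ τ) =
      (Nat.card H : k) • ∑ τ : H, W.character τ • ρ τ := by
    simp_rw [sum_smul_mul_sum_smul, Finset.smul_sum, smul_smul,
      FDRep.char_one_mul_sum_char_mul_char]
  set c := W.character 1 / Nat.card H
  calc (c • ∑ τ : H, W.character τ • ρ τ) * (c • ∑ τ : H, W.character τ • ρ τ)
      = (c * c / W.character 1) • (W.character 1 •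
          ((∑ τ : H, W.character τ • ρ τ) * ∑ τ : H, W.character τ • ρ τ)) := by
        rw [smul_mul_smul_comm, smul_smul, div_mul_cancel₀ _ hd]
    _ = c • ∑ τ : H, W.character τ • ρ τ := by
        rw [hSS, smul_smul]
        congr 1
        simp only [c]
        field_simp

end Symmetrizer

theorem LinearMap.charSymmetrizer_comp {k H M N : Type*} [Field k] [Group H] [Fintype H]
    [AddCommGroup M] [Module k M] [AddCommGroup N] [Module k N] (χ : H → k)
    {ρ : H →* Module.End k M} {ρ' : H →* Module.End k N} {ι : M →ₗ[k] N}
    (h : ∀ τ, ρ' τ ∘ₗ ι = ι ∘ₗ ρ τ) :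
    charSymmetrizer χ ρ' ∘ₗ ι = ι ∘ₗ charSymmetrizer χ ρ := by
  ext x
  have h' : ∀ τ, ρ' τ (ι x) = ι (ρ τ x) := fun τ => LinearMap.congr_fun (h τ) x
  simp [charSymmetrizer, h']

open MulAction Finset

section Orbit

variable {k H X : Type*} [Field k] [Group H] [Fintype H] [MulAction H X] {χ : H → k}

theorem sum_stabilizer_eq_of_mem_orbit (hχ : ∀ g h, χ (h * g * h⁻¹) = χ g) {x j : X}
    (hx : x ∈ orbit H j) : ∑ g : stabilizer H x, χ g = ∑ g : stabilizer H j, χ g := by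
  obtain ⟨σ, rfl⟩ := hx
  refine Fintype.sum_equiv (stabilizerEquivStabilizer rfl).toEquiv.symm _ _ fun g => ?_
  simpa [stabilizerEquivStabilizer_symm_apply] using (hχ g σ⁻¹).symm

/-- Frobenius reciprocity for the permutation character of an orbit, which is induced from the
trivial character of a stabilizer. -/
theorem card_inv_mul_sum_mul_card_fixedBy_orbit [CharZero k]
    (hχ : ∀ g h, χ (h * g * h⁻¹) = χ g) (j : X) [Fintype (orbit H j)] :
    (Nat.card H : k)⁻¹ * ∑ τ : H, χ τ * Nat.card (fixedBy (orbit H j) τ) =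
      (Nat.card (stabilizer H j) : k)⁻¹ * ∑ g : stabilizer H j, χ g := by
  have hsum : ∑ τ : H, χ τ * Nat.card (fixedBy (orbit H j) τ) =
      Nat.card (orbit H j) * ∑ g : stabilizer H j, χ g := calc
    _ = ∑ x : orbit H j, ∑ g : stabilizer H (x : X), χ g := by
        simp_rw [Nat.card_eq_fintype_card, Fintype.card_subtype, card_filter, Nat.cast_sum,
          mul_sum]
        rw [sum_comm]
        refine sum_congr rfl fun x _ => ?_
        rw [← sum_subtype {τ | τ ∈ stabilizer H (x : X)} (by simp), sum_filter]
        simp [mem_stabilizer_iff, Subtype.ext_iff]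
    _ = Nat.card (orbit H j) * ∑ g : stabilizer H j, χ g := by
        rw [sum_congr rfl fun x _ => sum_stabilizer_eq_of_mem_orbit hχ x.2, sum_const, card_univ,
          nsmul_eq_mul, Nat.card_eq_fintype_card]
  have horbit_stab : (Nat.card (orbit H j) : k) * Nat.card (stabilizer H j) = Nat.card H := by
    rw [← Nat.cast_mul, ← Nat.card_prod, Nat.card_congr (orbitProdStabilizerEquivGroup H j)]
  have hstab : (Nat.card (stabilizer H j) : k) ≠ 0 := Nat.cast_ne_zero.mpr Nat.card_pos.ne'
  have horbit : (Nat.card (orbit H j) : k) ≠ 0 :=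
    Nat.cast_ne_zero.mpr (Nat.card_ne_zero.mpr ⟨⟨⟨j, mem_orbit_self j⟩⟩, inferInstance⟩)
  rw [hsum, ← horbit_stab]
  field_simp

end Orbit

namespace Representation

variable {k H X : Type*} [Field k] [Group H] [MulAction H X] [Fintype X]

theorem trace_ofMulAction (g : H) :
    LinearMap.trace k (MonoidAlgebra k X) (ofMulAction k H X g) = Nat.card (fixedBy X g) := by
  rw [LinearMap.trace_eq_matrix_trace k (MonoidAlgebra.basis X k), Matrix.trace]
  simp only [Matrix.diag, LinearMap.toMatrix_apply, MonoidAlgebra.basis_apply, ofMulAction_single]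
  change ∑ x, (Finsupp.single (g • x) (1 : k)) x = _
  simp [Finsupp.single_apply, Nat.card_eq_fintype_card, Fintype.card_subtype]

theorem trace_charSymmetrizer_ofMulAction [Fintype H] (χ : H → k) :
    LinearMap.trace k (MonoidAlgebra k X) (charSymmetrizer χ (ofMulAction k H X)) =
      χ 1 * ((Nat.card H : k)⁻¹ * ∑ τ : H, χ τ * Nat.card (fixedBy X τ)) := by
  simp [charSymmetrizer, map_sum, trace_ofMulAction, div_eq_mul_inv, mul_assoc]

end Representation

section Cartesian

variable {V : Type*} [NormedAddCommGroup V] [InnerProductSpace ℂ V] {n m : ℕ}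

variable (V m) in
def cartPermRep : Equiv.Perm (Fin m) →* Module.End ℂ (CartPow V m) where
  toFun := CartQ V m
  map_one' := rfl
  map_mul' _ _ := rfl

theorem cartSym_eq_charSymmetrizer (G : Subgroup (Equiv.Perm (Fin m))) (χ : G → ℂ) :
    cartSym V m G χ = charSymmetrizer χ ((cartPermRep V m).comp G.subtype) :=
  rfl

theorem stdVec_eq_single (f : Fin n → V) (i : Fin n) :
    stdVec f m i = fun l => PiLp.single 2 l (f i) := by
  ext l a
  simp [stdVec]

theorem CartQ_stdVec (f : Fin n → V) (σ : Equiv.Perm (Fin m)) (i : Fin n) (l : Fin m) :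
    CartQ V m σ (stdVec f m i l) = stdVec f m i (σ l) := by
  ext a
  simp [CartQ, stdVec, Equiv.symm_apply_eq]

theorem linearIndependent_stdVec {f : Fin n → V} {i : Fin n} (hf : f i ≠ 0) :
    LinearIndependent ℂ (stdVec f m i) := by
  rw [stdVec_eq_single]
  exact PiLp.linearIndependent_single_of_ne_zero 2 ℂ (v := fun _ : Fin m => f i) fun _ => hf

variable {G : Subgroup (Equiv.Perm (Fin m))}

noncomputable def orbitStdVecMap (f : Fin n → V) (i : Fin n) (j : Fin m) :
    MonoidAlgebra ℂ (orbit G j) →ₗ[ℂ] CartPow V m :=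
  (MonoidAlgebra.basis (orbit G j) ℂ).constr ℂ fun l => stdVec f m i l

theorem orbitStdVecMap_injective {f : Fin n → V} {i : Fin n} (hf : f i ≠ 0) (j : Fin m) :
    Function.Injective (orbitStdVecMap (G := G) f i j) :=
  (MonoidAlgebra.basis (orbit G j) ℂ).injective_constr_of_linearIndependent
    ((linearIndependent_stdVec hf).comp _ Subtype.val_injective)

theorem range_orbitStdVecMap (f : Fin n → V) (i : Fin n) (j : Fin m) :
    LinearMap.range (orbitStdVecMap (G := G) f i j) =
      Submodule.span ℂ (Set.range fun σ : G => stdVec f m i (σ • j)) := by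
  rw [orbitStdVecMap, Basis.constr_range]
  congr 1
  ext x
  constructor
  · rintro ⟨⟨_, σ, rfl⟩, rfl⟩
    exact ⟨σ, rfl⟩
  · rintro ⟨σ, rfl⟩
    exact ⟨⟨σ • j, mem_orbit j σ⟩, rfl⟩

theorem cartPermRep_comp_orbitStdVecMap (f : Fin n → V) (i : Fin n) (j : Fin m) (τ : G) :
    (cartPermRep V m).comp G.subtype τ ∘ₗ orbitStdVecMap f i j =
      orbitStdVecMap f i j ∘ₗ Representation.ofMulAction ℂ G (orbit G j) τ := by
  set b := MonoidAlgebra.basis (orbit G j) ℂ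
  refine b.ext fun l => ?_
  have hτ : Representation.ofMulAction ℂ G (orbit G j) τ (b l) = b (τ • l) :=
    Representation.ofMulAction_single _ _ _
  rw [LinearMap.comp_apply, LinearMap.comp_apply, hτ, orbitStdVecMap, b.constr_basis,
    b.constr_basis]
  exact CartQ_stdVec _ _ _ _

end Cartesian

open Representation in
theorem finrank_cyclic_subspace_general
    (V : Type*) [NormedAddCommGroup V] [InnerProductSpace ℂ V]
    {n m : ℕ} (f : OrthonormalBasis (Fin n) ℂ V)
    (G : Subgroup (Equiv.Perm (Fin m))) (χ : ↥G → ℂ) (hχ : IsIrredChar χ)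
    (i : Fin n) (j : Fin m) :
    (Module.finrank ℂ (Submodule.span ℂ
      (Set.range fun σ : ↥G => cartSym V m G χ (stdVec ⇑f m i (σ • j)))) : ℂ) =
      χ 1 * charInnerTriv G χ j := by
  obtain ⟨W, hW, rfl⟩ := hχ
  set ι := orbitStdVecMap (G := G) f i j
  set P := charSymmetrizer W.character (ofMulAction ℂ G (orbit G j))
  have hspan : Submodule.span ℂ
      (Set.range fun σ : ↥G => cartSym V m G W.character (stdVec f m i (σ • j))) =
      (LinearMap.range P).map ι := by
    rw [← LinearMap.range_comp, ← LinearMap.charSymmetrizer_comp _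
      (cartPermRep_comp_orbitStdVecMap f i j), ← cartSym_eq_charSymmetrizer, LinearMap.range_comp,
      range_orbitStdVecMap, Submodule.map_span, ← Set.range_comp]
    rfl
  rw [hspan, ← (Submodule.equivMapOfInjective ι
      (orbitStdVecMap_injective (f.orthonormal.ne_zero i) j) _).finrank_eq,
    ← (LinearMap.IsIdempotentElem.isProj_range _ (isIdempotentElem_charSymmetrizer W _)).trace,
    trace_charSymmetrizer_ofMulAction,
    card_inv_mul_sum_mul_card_fixedBy_orbit (fun g h => FDRep.char_conj W g h), charInnerTriv]
  -- the two sides differ only in the `Fintype` instance on the stabilizer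
  congr!

/-- `dim V^χ_{ij} = χ(1)·[χ, 1_{G_j}]` for every `i` and every `j` with
`[χ, 1_{G_j}] ≠ 0`. -/
theorem finrank_cyclic_subspace
    (V : Type*) [NormedAddCommGroup V] [InnerProductSpace ℂ V] [FiniteDimensional ℂ V]
    {n m : ℕ} (f : OrthonormalBasis (Fin n) ℂ V)
    (G : Subgroup (Equiv.Perm (Fin m))) (χ : ↥G → ℂ) (hχ : IsIrredChar χ)
    (i : Fin n) (j : Fin m) (hj : charInnerTriv G χ j ≠ 0) :
    (Module.finrank ℂ (Submodule.span ℂ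
      (Set.range fun σ : ↥G => cartSym V m G χ (stdVec ⇑f m i (σ • j)))) : ℂ) =
      χ 1 * charInnerTriv G χ j :=
  finrank_cyclic_subspace_general V f G χ hχ i j
end

section
/- If G is the cyclic subgroup of S_m generated by the m-cycle (1 2 ⋯ m), then for every irreducible character λ of G, dim V^λ(G) = dim V. -/
open scoped Classical InnerProductSpace ComplexConjugate

/-!
By Schur's lemma an irreducible character of the abelian group `G = ⟨(1 2 ⋯ m)⟩` has the form
`χ = χ(1) • c` with `c : G →* ℂ`, and `G` acts regularly on `Fin m`. Reindexing the sum defining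
`C_χ` gives `(C_χ w)_{τ i} = c(τ) (C_χ w)_i`, so by transitivity a vector of `V^χ(G)` is
determined by its coordinate at `0`. Conversely, since only the identity fixes `0`, the
coordinate at `0` of `C_χ (v, 0, …, 0)` is `χ(1)² / |G| • v`. Hence evaluation at `0` is an
isomorphism `V^χ(G) ≃ V`.
-/

open CategoryTheory Module

section Representation

variable {G : Type} [Group G]

theorem FDRep.nontrivial_of_simple (W : FDRep ℂ G) [Simple W] : Nontrivial W := by
  by_contra hW
  have : Subsingleton W := not_nontrivial_iff_subsingleton.mp hW
  exact id_nonzero W (Action.hom_ext _ _ (by ext x; exact Subsingleton.elim _ _))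

theorem FDRep.exists_ρ_eq_smul_id [IsMulCommutative G] (W : FDRep ℂ G) [Simple W] (g : G) :
    ∃ c : ℂ, W.ρ g = c • LinearMap.id := by
  let f : W ⟶ W := ⟨FGModuleCat.ofHom (W.ρ g), fun h => by
    ext x
    change W.ρ g (W.ρ h x) = W.ρ h (W.ρ g x)
    rw [← Module.End.mul_apply, ← Module.End.mul_apply, ← map_mul, ← map_mul, mul_comm' h g]⟩
  obtain ⟨c, hc⟩ := endomorphism_simple_eq_smul_id ℂ f
  exact ⟨c, LinearMap.ext fun x => (congr(⇑(Action.Hom.hom $hc) x)).symm⟩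

theorem IsIrredChar.exists_monoidHom [IsMulCommutative G] {χ : G → ℂ} (hχ : IsIrredChar χ) :
    χ 1 ≠ 0 ∧ ∃ c : G →* ℂ, ∀ g, χ g = χ 1 * c g := by
  obtain ⟨W, hW, rfl⟩ := hχ
  have := W.nontrivial_of_simple
  choose c hc using W.exists_ρ_eq_smul_id
  have hinj : Function.Injective fun a : ℂ => a • (LinearMap.id : W →ₗ[ℂ] W) :=
    smul_left_injective ℂ (one_ne_zero : (1 : Module.End ℂ W) ≠ 0)
  have hχc : ∀ g, W.character g = finrank ℂ W * c g := fun g => by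
    rw [FDRep.character, hc, map_smul, LinearMap.trace_id, smul_eq_mul, mul_comm]
  let c' : G →* ℂ :=
    { toFun := c
      map_one' := hinj (by simp only [← hc, map_one, one_smul]; rfl)
      map_mul' := fun g h => hinj (by
        simp only [← hc, map_mul, mul_smul]
        ext x
        simp [hc, smul_smul, mul_comm]) }
  rw [FDRep.char_one]
  exact ⟨Nat.cast_ne_zero.mpr finrank_pos.ne', c', hχc⟩

end Representation

section CartesianSymmetrizer

variable {V : Type*} [NormedAddCommGroup V] [InnerProductSpace ℂ V] {m : ℕ}
  {G : Subgroup (Equiv.Perm (Fin m))} {χ : G → ℂ}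

theorem cartSym_apply (w : CartPow V m) (i : Fin m) :
    cartSym V m G χ w i =
      (χ 1 / Nat.card G) • ∑ τ : G, χ τ • w ((τ : Equiv.Perm (Fin m))⁻¹ i) := by
  simp [cartSym, CartQ, WithLp.ofLp_sum]

theorem cartSym_apply_perm_apply (c : G →* ℂ) (hχ : ∀ g, χ g = χ 1 * c g) (w : CartPow V m)
    (τ : G) (i : Fin m) :
    cartSym V m G χ w ((τ : Equiv.Perm (Fin m)) i) = c τ • cartSym V m G χ w i := by
  rw [cartSym_apply, cartSym_apply, smul_comm (c τ)]
  congr 1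
  rw [Finset.smul_sum]
  refine Fintype.sum_equiv (Equiv.mulLeft τ⁻¹) _ _ fun ρ => ?_
  have hc : c τ * χ (τ⁻¹ * ρ) = χ ρ := by
    rw [hχ, hχ ρ, map_mul, mul_left_comm, ← mul_assoc (c τ), ← map_mul, mul_inv_cancel, map_one,
      one_mul]
  simp only [Equiv.coe_mulLeft, smul_smul, hc, Subgroup.coe_mul, Subgroup.coe_inv, mul_inv_rev,
    inv_inv, Equiv.Perm.mul_apply]

theorem cartSym_toLp_single_apply_self {i₀ : Fin m}
    (hfree : ∀ τ : G, (τ : Equiv.Perm (Fin m)) i₀ = i₀ → τ = 1) (v : V) :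
    cartSym V m G χ (WithLp.toLp 2 (Pi.single i₀ v)) i₀ = (χ 1 / Nat.card G * χ 1) • v := by
  rw [cartSym_apply, Finset.sum_eq_single 1, mul_smul]
  · rw [OneMemClass.coe_one, inv_one, Equiv.Perm.one_apply, PiLp.toLp_apply, Pi.single_eq_same]
  · intro τ _ hτ
    have : (τ : Equiv.Perm (Fin m))⁻¹ i₀ ≠ i₀ := fun h => hτ (inv_eq_one.mp (hfree τ⁻¹ h))
    rw [PiLp.toLp_apply, Pi.single_eq_of_ne this, smul_zero]
  · exact absurd (Finset.mem_univ 1)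

theorem finrank_range_cartSym_of_regular (i₀ : Fin m)
    (hfree : ∀ τ : G, (τ : Equiv.Perm (Fin m)) i₀ = i₀ → τ = 1)
    (htrans : ∀ j, ∃ τ : G, (τ : Equiv.Perm (Fin m)) i₀ = j)
    (c : G →* ℂ) (hχ1 : χ 1 ≠ 0) (hχ : ∀ g, χ g = χ 1 * c g) :
    finrank ℂ (LinearMap.range (cartSym V m G χ)) = finrank ℂ V := by
  let eval : LinearMap.range (cartSym V m G χ) →ₗ[ℂ] V :=
    PiLp.projₗ 2 (fun _ => V) i₀ ∘ₗ (LinearMap.range (cartSym V m G χ)).subtype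
  have hinj : Function.Injective eval := by
    rw [← LinearMap.ker_eq_bot, LinearMap.ker_eq_bot']
    rintro ⟨_, w, rfl⟩ hw
    ext j
    obtain ⟨τ, rfl⟩ := htrans j
    change cartSym V m G χ w i₀ = 0 at hw
    simp [cartSym_apply_perm_apply c hχ, hw]
  have hsurj : Function.Surjective eval := by
    intro v
    set b : ℂ := χ 1 / Nat.card G * χ 1
    have hb : b ≠ 0 := by simp [b, hχ1]
    refine ⟨⟨_, LinearMap.mem_range_self _ (WithLp.toLp 2 (Pi.single i₀ (b⁻¹ • v)))⟩, ?_⟩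
    change cartSym V m G χ _ i₀ = v
    rw [cartSym_toLp_single_apply_self hfree, smul_inv_smul₀ hb]
  exact (LinearEquiv.ofBijective eval ⟨hinj, hsurj⟩).finrank_eq

end CartesianSymmetrizer

theorem Subgroup.eq_one_of_apply_eq_self {α : Type*} {G : Subgroup (Equiv.Perm α)}
    [IsMulCommutative G] {i₀ : α} (htrans : ∀ j, ∃ τ : G, (τ : Equiv.Perm α) i₀ = j) {τ : G}
    (hτ : (τ : Equiv.Perm α) i₀ = i₀) : τ = 1 := by
  ext j
  obtain ⟨ρ, rfl⟩ := htrans j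
  rw [← Equiv.Perm.mul_apply, ← Subgroup.coe_mul, mul_comm' τ ρ, Subgroup.coe_mul,
    Equiv.Perm.mul_apply, hτ]
  rfl

theorem finRotate_pow_val_apply_zero {m : ℕ} [NeZero m] (j : Fin m) :
    (finRotate m ^ (j : ℕ)) 0 = j := by
  rw [← Equiv.Perm.iterate_eq_pow, ← finCycle_eq_finRotate_iterate, finCycle_apply, zero_add]

theorem finrank_cartSymClass_of_full_cycle_general
    (V : Type*) [NormedAddCommGroup V] [InnerProductSpace ℂ V]
    (m : ℕ) (hm : 1 ≤ m)
    (χ : ↥(Subgroup.zpowers (finRotate m)) → ℂ) (hχ : IsIrredChar χ) :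
    Module.finrank ℂ (LinearMap.range (cartSym V m (Subgroup.zpowers (finRotate m)) χ)) =
      Module.finrank ℂ V := by
  have : NeZero m := ⟨by omega⟩
  have htrans : ∀ j, ∃ τ : Subgroup.zpowers (finRotate m), (τ : Equiv.Perm (Fin m)) 0 = j :=
    fun j => ⟨⟨_, Subgroup.pow_mem _ (Subgroup.mem_zpowers _) j⟩, finRotate_pow_val_apply_zero j⟩
  obtain ⟨hχ1, c, hχc⟩ := hχ.exists_monoidHom
  exact finrank_range_cartSym_of_regular 0 (fun _ => Subgroup.eq_one_of_apply_eq_self htrans)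
    htrans c hχ1 hχc

/-- if `G` is the cyclic group generated by the `m`-cycle `(1 2 ⋯ m)`,
then `dim V^χ(G) = dim V` for every irreducible character `χ` of `G`. -/
theorem finrank_cartSymClass_of_full_cycle
    (V : Type*) [NormedAddCommGroup V] [InnerProductSpace ℂ V] [FiniteDimensional ℂ V]
    (m : ℕ) (hm : 1 ≤ m)
    (χ : ↥(Subgroup.zpowers (finRotate m)) → ℂ) (hχ : IsIrredChar χ) :
    Module.finrank ℂ (LinearMap.range (cartSym V m (Subgroup.zpowers (finRotate m)) χ)) =
      Module.finrank ℂ V :=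
  finrank_cartSymClass_of_full_cycle_general V m hm χ hχ
end

section
/- Let G = ⟨σ_1⟩×⟨σ_2⟩×⋯×⟨σ_k⟩ ≤ S_m with k ≥ 2, where σ_ℓ are disjoint cycles of orders m_ℓ, and let λ = λ_{q_1}⋯λ_{q_k} with λ_{q_ℓ}(σ_ℓ^{j}) = exp(2πi q_ℓ j/m_ℓ). Then dim V^λ(G) = (dim V)·[ (m − Σ_ℓ m_ℓ)·[λ, 1_G] + Σ_{j=1}^{k} Π_{ℓ≠j} (1/m_ℓ) Σ_{d|m_ℓ} c_{m_ℓ/d}(q_ℓ) ], where c_n(q) is the Ramanujan sum. -/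
open scoped Classical InnerProductSpace ComplexConjugate

/-!
Since `λ` is multiplicative, `C_λ` is idempotent, so `dim V^λ(G) = tr C_λ`
`= |G|⁻¹ Σ_τ λ(τ) tr Q(τ)`, and `tr Q(τ) = (dim V) · #fix(τ)`. The map
`(x_ℓ) ↦ Π σ_ℓ ^ x_ℓ` identifies `Π ℤ/m_ℓ` with `G`, and the fixed points of `Π σ_ℓ ^ x_ℓ`
number `m - Σ_{x_ℓ ≠ 0} m_ℓ = (m - Σ m_ℓ) + Σ_j [x_j = 0] m_j`. The `j`-th term of the
character sum factors over `ℓ ≠ j` into the sums `Σ_{t < m_ℓ} e^{2πi q_ℓ t / m_ℓ}`, which equal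
`Σ_{d ∣ m_ℓ} c_{m_ℓ/d}(q_ℓ)` after sorting the fractions `t / m_ℓ` by reduced denominator.
-/

section Ramanujan

open Finset

theorem Nat.sum_divisors_sum_coprime_div {M : Type*} [AddCommMonoid M] (n : ℕ) (F : ℚ → M) :
    ∑ d ∈ n.divisors, ∑ s ∈ range d with Nat.gcd s d = 1, F (s / d) =
      ∑ t ∈ range n, F (t / n) := by
  rcases Nat.eq_zero_or_pos n with rfl | hn
  · simp
  have hquot_pos {d : ℕ} (hd : d ∣ n) : 0 < n / d :=
    Nat.div_pos (Nat.le_of_dvd hn hd) (Nat.pos_of_dvd_of_pos hd hn)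
  rw [Finset.sum_sigma']
  -- `t ↦ (n / gcd t n, t / gcd t n)` writes `t / n` in lowest terms
  refine Finset.sum_nbij' (fun p => p.2 * (n / p.1)) (fun t => ⟨n / t.gcd n, t / t.gcd n⟩)
    ?_ ?_ ?_ ?_ ?_
  · rintro ⟨d, s⟩ hp
    simp only [mem_sigma, Nat.mem_divisors, mem_filter, mem_range] at hp ⊢
    obtain ⟨⟨hd, -⟩, hs, -⟩ := hp
    calc s * (n / d) < d * (n / d) := Nat.mul_lt_mul_of_pos_right hs (hquot_pos hd)
      _ = n := Nat.mul_div_cancel' hd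
  · intro t ht
    simp only [mem_range] at ht
    simp only [mem_sigma, Nat.mem_divisors, mem_filter, mem_range]
    exact ⟨⟨Nat.div_dvd_of_dvd (Nat.gcd_dvd_right t n), hn.ne'⟩,
      Nat.div_lt_div_of_lt_of_dvd (Nat.gcd_dvd_right t n) ht,
      Nat.coprime_div_gcd_div_gcd (Nat.gcd_pos_of_pos_right t hn)⟩
  · rintro ⟨d, s⟩ hp
    simp only [mem_sigma, Nat.mem_divisors, mem_filter, mem_range] at hp
    obtain ⟨⟨hd, -⟩, -, hcop⟩ := hp
    have hgcd : Nat.gcd (s * (n / d)) n = n / d := by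
      simpa only [Nat.gcd_mul_right, hcop, one_mul, Nat.mul_div_cancel' hd] using
        Nat.gcd_mul_right s (n / d) d
    simp only [hgcd, Nat.div_div_self hd hn.ne', Nat.mul_div_cancel _ (hquot_pos hd)]
  · intro t _
    simp only [Nat.div_div_self (Nat.gcd_dvd_right t n) hn.ne',
      Nat.div_mul_cancel (Nat.gcd_dvd_left t n)]
  · rintro ⟨d, s⟩ hp
    simp only [mem_sigma, Nat.mem_divisors] at hp
    have hd : (d : ℚ) ≠ 0 := Nat.cast_ne_zero.mpr (Nat.pos_of_dvd_of_pos hp.1.1 hn).ne'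
    congr 1
    rw [Nat.cast_mul, Nat.cast_div hp.1.1 hd]
    field_simp

open Complex Real in
theorem sum_divisors_ramanujanSum (n q : ℕ) :
    ∑ d ∈ n.divisors, ramanujanSum (n / d) q =
      ∑ t ∈ range n, exp (2 * π * I * q * t / n) := by
  have h := Nat.sum_divisors_sum_coprime_div n fun r : ℚ => exp (2 * π * I * q * r)
  simp only [Rat.cast_div, Rat.cast_natCast, ← mul_div_assoc] at h
  rw [Nat.sum_div_divisors n fun d => ramanujanSum d q, ← h]
  rfl

open Complex Real in
theorem ZMod.stdAddChar_natCast_mul_natCast {n : ℕ} [NeZero n] (q t : ℕ) :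
    ZMod.stdAddChar ((q : ZMod n) * (t : ZMod n)) = exp (2 * π * I * q * t / n) := by
  rw [← Nat.cast_mul, ← Int.cast_natCast, ZMod.stdAddChar_coe]
  push_cast
  ring_nf

theorem ZMod.sum_range_natCast {M : Type*} [AddCommMonoid M] (n : ℕ) [NeZero n]
    (F : ZMod n → M) : ∑ t ∈ range n, F t = ∑ x, F x :=
  Finset.sum_nbij' (fun t => (t : ZMod n)) ZMod.val (fun _ _ => mem_univ _)
    (fun x _ => mem_range.mpr (ZMod.val_lt x))
    (fun _ ht => ZMod.val_natCast_of_lt (mem_range.mp ht)) (fun x _ => ZMod.natCast_zmod_val x)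
    fun _ _ => rfl

theorem ZMod.sum_stdAddChar_natCast_mul (n q : ℕ) [NeZero n] :
    ∑ x : ZMod n, ZMod.stdAddChar ((q : ZMod n) * x) =
      ∑ d ∈ n.divisors, ramanujanSum (n / d) q := by
  rw [sum_divisors_ramanujanSum, ← ZMod.sum_range_natCast]
  simp only [ZMod.stdAddChar_natCast_mul_natCast]

end Ramanujan

section CartesianSymmetrizer

open Finset Module LinearMap

theorem LinearMap.funLeft_perm_eq_sum {R M ι : Type*} [Semiring R] [AddCommMonoid M]
    [Module R M] [Fintype ι] [DecidableEq ι] (τ : Equiv.Perm ι) :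
    funLeft R M τ = ∑ i, single R (fun _ : ι => M) i ∘ₗ proj (τ i) := by
  ext u i
  simp [Finset.sum_apply, Pi.single_apply]

theorem LinearMap.trace_funLeft_perm {R M ι : Type*} [CommRing R] [AddCommGroup M] [Module R M]
    [Module.Free R M] [Module.Finite R M] [Fintype ι] [DecidableEq ι] (τ : Equiv.Perm ι) :
    trace R (ι → M) (funLeft R M τ) = #{i | τ i = i} * finrank R M := by
  have hsummand (i : ι) : trace R (ι → M) (single R (fun _ : ι => M) i ∘ₗ proj (τ i)) =
      if τ i = i then (finrank R M : R) else 0 := by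
    rw [trace_comp_comm']
    split_ifs with h
    · rw [h, proj_comp_single_same, trace_id]
    · rw [proj_comp_single_ne _ _ _ _ h, map_zero]
  rw [funLeft_perm_eq_sum, map_sum, Finset.sum_congr rfl fun i _ => hsummand i, Finset.sum_ite,
    Finset.sum_const_zero, add_zero, Finset.sum_const, nsmul_eq_mul]

theorem Fintype.sum_smul_mul_sum_smul_of_map_mul {K A G : Type*} [CommSemiring K] [Semiring A]
    [Algebra K A] [Group G] [Fintype G] (ρ : G →* A) (χ : G → K)
    (hχ : ∀ a b, χ (a * b) = χ a * χ b) :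
    (∑ g, χ g • ρ g) * (∑ g, χ g • ρ g) = Fintype.card G • ∑ g, χ g • ρ g := by
  rw [Finset.sum_mul_sum, ← Finset.card_univ, ← Finset.sum_const]
  refine Finset.sum_congr rfl fun g _ => ?_
  simp_rw [smul_mul_smul_comm, ← map_mul, ← hχ]
  exact Fintype.sum_equiv (Equiv.mulLeft g) _ _ fun _ => rfl

variable {V : Type*} [NormedAddCommGroup V] [InnerProductSpace ℂ V]

theorem cartQ_conj (m : ℕ) (τ : Equiv.Perm (Fin m)) :
    (WithLp.linearEquiv 2 ℂ (Fin m → V)).conj (CartQ V m τ) = funLeft ℂ V ⇑τ⁻¹ := by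
  ext u i
  simp [CartQ, LinearEquiv.conj_apply, Pi.single_apply]

theorem trace_cartQ [FiniteDimensional ℂ V] (m : ℕ) (τ : Equiv.Perm (Fin m)) :
    trace ℂ (CartPow V m) (CartQ V m τ) = (finrank ℂ V : ℂ) * ((m : ℂ) - #τ.support) := by
  rw [← trace_conj' _ (WithLp.linearEquiv 2 ℂ (Fin m → V)), cartQ_conj, trace_funLeft_perm]
  have hfix : ({i | τ⁻¹ i = i} : Finset (Fin m)) = τ.supportᶜ := by
    ext i
    simp only [mem_filter, mem_univ, true_and, mem_compl, Equiv.Perm.mem_support, not_not,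
      Equiv.Perm.inv_eq_iff_eq]
    exact eq_comm
  have hsupp : #τ.support ≤ m := (card_le_univ _).trans_eq (Fintype.card_fin m)
  rw [hfix, card_compl, Fintype.card_fin, Nat.cast_sub hsupp, mul_comm]

variable (V) in
def cartQHom (m : ℕ) :
    Equiv.Perm (Fin m) →* Module.End ℂ (CartPow V m) where
  toFun := CartQ V m
  map_one' := by ext; rfl
  map_mul' _ _ := by ext; rfl

theorem isIdempotentElem_cartSym (m : ℕ) (G : Subgroup (Equiv.Perm (Fin m))) (χ : G → ℂ)
    (hχ1 : χ 1 = 1) (hχ : ∀ a b, χ (a * b) = χ a * χ b) :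
    IsIdempotentElem (cartSym V m G χ) := by
  have hsq : (∑ τ : G, χ τ • CartQ V m τ) * (∑ τ : G, χ τ • CartQ V m τ) =
      Fintype.card G • ∑ τ : G, χ τ • CartQ V m τ :=
    Fintype.sum_smul_mul_sum_smul_of_map_mul ((cartQHom V m).comp G.subtype) χ hχ
  have hG : (Fintype.card G : ℂ) ≠ 0 := Nat.cast_ne_zero.mpr Fintype.card_ne_zero
  rw [IsIdempotentElem, cartSym, hχ1, smul_mul_smul_comm, hsq, Nat.card_eq_fintype_card,
    ← Nat.cast_smul_eq_nsmul ℂ, smul_smul]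
  congr 1
  field_simp

theorem finrank_range_cartSym [FiniteDimensional ℂ V] (m : ℕ)
    (G : Subgroup (Equiv.Perm (Fin m))) (χ : G → ℂ) (hχ1 : χ 1 = 1)
    (hχ : ∀ a b, χ (a * b) = χ a * χ b) :
    (finrank ℂ (range (cartSym V m G χ)) : ℂ) = finrank ℂ V *
      ((Nat.card G : ℂ)⁻¹ * ∑ τ : G, χ τ * ((m : ℂ) - #(τ : Equiv.Perm (Fin m)).support)) := by
  rw [← (isIdempotentElem_cartSym m G χ hχ1 hχ).isProj_range.trace, cartSym, hχ1, one_div,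
    map_smul, map_sum, smul_eq_mul, Finset.mul_sum, Finset.mul_sum, Finset.mul_sum]
  refine Finset.sum_congr rfl fun τ _ => ?_
  rw [map_smul, trace_cartQ, smul_eq_mul]
  ring

end CartesianSymmetrizer

theorem Finset.noncommProd_univ_fin {M : Type*} [Monoid M] {k : ℕ} (f : Fin k → M) (comm) :
    Finset.univ.noncommProd f comm = (List.ofFn f).prod := by
  have h : Finset.univ.val.map f = (List.ofFn f : Multiset M) := by
    rw [← Fin.univ_val_map]
  rw [← Multiset.noncommProd_coe _ (h ▸ Finset.noncommProd_lemma _ f comm), Finset.noncommProd]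
  congr 1

section PowHom

variable {G : Type*} [Group G]

def zmodPowHom (g : G) (n : ℕ) [NeZero n] (hg : g ^ n = 1) : Multiplicative (ZMod n) →* G where
  toFun x := g ^ x.toAdd.val
  map_one' := by simp
  map_mul' x y := by rw [toAdd_mul, ZMod.val_add, ← pow_eq_pow_mod _ hg, pow_add]

theorem range_zmodPowHom (g : G) (n : ℕ) [NeZero n] (hg : g ^ n = 1) :
    (zmodPowHom g n hg).range = Subgroup.zpowers g := by
  refine le_antisymm ?_ (Subgroup.zpowers_le.mpr ⟨Multiplicative.ofAdd 1, ?_⟩)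
  · rintro _ ⟨x, rfl⟩
    exact Subgroup.npow_mem_zpowers g _
  · change g ^ (1 : ZMod n).val = g
    rw [ZMod.val_one_eq_one_mod, ← pow_eq_pow_mod _ hg, pow_one]

variable {ι : Type*}

theorem pairwise_commute_zmodPowHom {g : ι → G} (hg : Pairwise fun i j => Commute (g i) (g j))
    {n : ι → ℕ} [∀ i, NeZero (n i)] (hn : ∀ i, g i ^ n i = 1) :
    Pairwise fun i j => ∀ x y,
      Commute (zmodPowHom (g i) (n i) (hn i) x) (zmodPowHom (g j) (n j) (hn j) y) :=
  fun _ _ hij _ _ => (hg hij).pow_pow _ _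

variable [Fintype ι]

def zmodPiPowHom (g : ι → G) (hg : Pairwise fun i j => Commute (g i) (g j))
    (n : ι → ℕ) [∀ i, NeZero (n i)] (hn : ∀ i, g i ^ n i = 1) :
    (∀ i, Multiplicative (ZMod (n i))) →* G :=
  MonoidHom.noncommPiCoprod _ (pairwise_commute_zmodPowHom hg hn)

theorem zmodPiPowHom_apply (g : ι → G) (hg : Pairwise fun i j => Commute (g i) (g j))
    (n : ι → ℕ) [∀ i, NeZero (n i)] (hn : ∀ i, g i ^ n i = 1)
    (f : ∀ i, Multiplicative (ZMod (n i))) :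
    zmodPiPowHom g hg n hn f = Finset.univ.noncommProd (fun i => g i ^ (f i).toAdd.val)
      fun _ _ _ _ hij => (hg hij).pow_pow _ _ :=
  MonoidHom.noncommPiCoprod_apply _ _

theorem range_zmodPiPowHom (g : ι → G) (hg : Pairwise fun i j => Commute (g i) (g j))
    (n : ι → ℕ) [∀ i, NeZero (n i)] (hn : ∀ i, g i ^ n i = 1) :
    (zmodPiPowHom g hg n hn).range = ⨆ i, Subgroup.zpowers (g i) :=
  (MonoidHom.noncommPiCoprod_range _).trans
    (iSup_congr fun i => range_zmodPowHom (g i) (n i) (hn i))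

end PowHom

section DisjointCycles

open Equiv Perm Finset

variable {α ι : Type*} [Fintype ι] {σ : ι → Perm α} {n : ι → ℕ} [∀ i, NeZero (n i)]

abbrev disjointPowHom (hdisj : Pairwise fun i j => (σ i).Disjoint (σ j))
    (hn : ∀ i, orderOf (σ i) = n i) : (∀ i, Multiplicative (ZMod (n i))) →* Perm α :=
  zmodPiPowHom σ (hdisj.mono fun _ _ => Disjoint.commute) n
    fun i => hn i ▸ pow_orderOf_eq_one (σ i)

theorem disjointPowHom_apply_eq_prod_ofFn {k : ℕ} {σ : Fin k → Perm α} {n : Fin k → ℕ}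
    [∀ i, NeZero (n i)] (hdisj : Pairwise fun i j => (σ i).Disjoint (σ j))
    (hn : ∀ i, orderOf (σ i) = n i) (f : ∀ i, Multiplicative (ZMod (n i))) :
    disjointPowHom hdisj hn f = (List.ofFn fun i => σ i ^ (f i).toAdd.val).prod :=
  (zmodPiPowHom_apply _ _ _ _ f).trans (Finset.noncommProd_univ_fin _ _)

variable [Fintype α] [DecidableEq α]

theorem Equiv.Perm.IsCycle.card_support_pow_val {τ : Perm α} (hτ : τ.IsCycle) {n : ℕ} [NeZero n]
    (hn : orderOf τ = n) (x : ZMod n) : #(τ ^ x.val).support = if x = 0 then 0 else n := by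
  split_ifs with hx
  · simp [hx]
  · have hndvd : ¬ orderOf τ ∣ x.val := by
      rwa [hn, ← ZMod.natCast_eq_zero_iff, ZMod.natCast_zmod_val]
    rw [hτ.support_pow_eq_iff.mpr hndvd, ← hτ.orderOf, hn]

theorem card_support_disjointPowHom (hdisj : Pairwise fun i j => (σ i).Disjoint (σ j))
    (hn : ∀ i, orderOf (σ i) = n i) (hσ : ∀ i, (σ i).IsCycle)
    (f : ∀ i, Multiplicative (ZMod (n i))) :
    #(disjointPowHom hdisj hn f).support = ∑ i, if f i = 1 then 0 else n i := by
  have hpow : Set.Pairwise (univ : Finset ι) fun i j =>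
      (σ i ^ (f i).toAdd.val).Disjoint (σ j ^ (f j).toAdd.val) :=
    fun _ _ _ _ hij => (hdisj hij).pow_disjoint_pow _ _
  rw [disjointPowHom, zmodPiPowHom_apply, support_noncommProd hpow,
    card_biUnion fun _ _ _ _ hij => ((hdisj hij).pow_disjoint_pow _ _).disjoint_support]
  refine sum_congr rfl fun i _ => ?_
  simp only [(hσ i).card_support_pow_val (hn i), toAdd_eq_zero]

theorem injective_disjointPowHom (hdisj : Pairwise fun i j => (σ i).Disjoint (σ j))
    (hn : ∀ i, orderOf (σ i) = n i) (hσ : ∀ i, (σ i).IsCycle) :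
    Function.Injective (disjointPowHom hdisj hn) := by
  refine (injective_iff_map_eq_one _).mpr fun f hf => funext fun i => ?_
  have h := card_support_disjointPowHom hdisj hn hσ f
  rw [hf, support_one, card_empty, eq_comm, Finset.sum_eq_zero_iff] at h
  simpa [NeZero.ne (n i)] using h i (mem_univ i)

noncomputable def disjointPowEquiv (hdisj : Pairwise fun i j => (σ i).Disjoint (σ j))
    (hn : ∀ i, orderOf (σ i) = n i) (hσ : ∀ i, (σ i).IsCycle) :
    (∀ i, Multiplicative (ZMod (n i))) ≃* ↥(⨆ i, Subgroup.zpowers (σ i)) :=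
  (MonoidHom.ofInjective (injective_disjointPowHom hdisj hn hσ)).trans
    (MulEquiv.subgroupCongr (range_zmodPiPowHom _ _ _ _))

theorem card_iSup_zpowers_of_disjoint (hdisj : Pairwise fun i j => (σ i).Disjoint (σ j))
    (hn : ∀ i, orderOf (σ i) = n i) (hσ : ∀ i, (σ i).IsCycle) :
    Nat.card ↥(⨆ i, Subgroup.zpowers (σ i)) = ∏ i, n i := by
  rw [← Nat.card_congr (disjointPowEquiv hdisj hn hσ).toEquiv, Nat.card_pi]
  simp

end DisjointCycles

section SlicedSums

open Finset

variable {ι : Type*} [Fintype ι] [DecidableEq ι] {X : ι → Type*} [∀ i, Fintype (X i)]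
  [∀ i, DecidableEq (X i)]

theorem Fintype.sum_pi_ite_eq_prod {R : Type*} [CommSemiring R] (x₀ : ∀ i, X i)
    (e : ∀ i, X i → R) (j : ι) :
    ∑ f : ∀ i, X i, (if f j = x₀ j then ∏ i, e i (f i) else 0) =
      e j (x₀ j) * ∏ i ∈ univ.erase j, ∑ x, e i x := by
  let w : ∀ i, X i → R := fun i x => if i = j ∧ x ≠ x₀ i then 0 else e i x
  have hw (f : ∀ i, X i) : (if f j = x₀ j then ∏ i, e i (f i) else 0) = ∏ i, w i (f i) := by
    split_ifs with hf
    · refine Finset.prod_congr rfl fun i _ => (if_neg ?_).symm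
      rintro ⟨rfl, hi⟩
      exact hi hf
    · exact (Finset.prod_eq_zero (mem_univ j) (if_pos ⟨rfl, hf⟩ : w j (f j) = 0)).symm
  have hwj : ∑ x, w j x = e j (x₀ j) := by
    rw [Fintype.sum_eq_single (x₀ j) fun x hx => if_pos ⟨rfl, hx⟩, if_neg (by simp)]
  rw [Finset.sum_congr rfl fun f _ => hw f, ← Fintype.prod_sum,
    ← mul_prod_erase _ _ (mem_univ j), hwj]
  congr 1
  refine Finset.prod_congr rfl fun i hi => Finset.sum_congr rfl fun x _ => if_neg fun h => ?_
  exact (ne_of_mem_erase hi) h.1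

theorem Fintype.sum_pi_prod_mul_sub_sum_ite {R : Type*} [CommRing R] (x₀ : ∀ i, X i)
    (e : ∀ i, X i → R) (he : ∀ i, e i (x₀ i) = 1) (M : R) :
    ∑ f : ∀ i, X i, (∏ i, e i (f i)) * (M - ∑ i, if f i = x₀ i then 0 else (card (X i) : R)) =
      (M - ∑ i, (card (X i) : R)) * ∑ f : ∀ i, X i, ∏ i, e i (f i) +
        ∑ j, card (X j) * ∏ i ∈ univ.erase j, ∑ x, e i x := by
  have hsplit (f : ∀ i, X i) : M - ∑ i, (if f i = x₀ i then 0 else (card (X i) : R)) =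
      (M - ∑ i, (card (X i) : R)) + ∑ j, if f j = x₀ j then (card (X j) : R) else 0 := by
    have h : ∑ i, (card (X i) : R) = ∑ i, (if f i = x₀ i then 0 else (card (X i) : R)) +
        ∑ i, if f i = x₀ i then (card (X i) : R) else 0 := by
      rw [← Finset.sum_add_distrib]
      exact Finset.sum_congr rfl fun i _ => by split_ifs <;> simp
    linear_combination h
  have hslice (j : ι) :
      ∑ f : ∀ i, X i, (∏ i, e i (f i)) * (if f j = x₀ j then (card (X j) : R) else 0) =
        card (X j) * ∏ i ∈ univ.erase j, ∑ x, e i x := by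
    rw [← one_mul (∏ i ∈ univ.erase j, _), ← he j, ← Fintype.sum_pi_ite_eq_prod x₀ e j,
      Finset.mul_sum]
    exact Finset.sum_congr rfl fun f _ => by split_ifs <;> ring
  simp only [hsplit, mul_add, Finset.sum_add_distrib, Finset.mul_sum univ _ (∏ i, e i _)]
  rw [Finset.sum_comm (s := univ) (t := univ), ← Finset.sum_mul, mul_comm]
  simp only [hslice]

theorem Fintype.inv_prod_card_mul_sum_pi_prod_mul_sub_sum_ite {K : Type*} [Field K]
    [CharZero K] (x₀ : ∀ i, X i) (e : ∀ i, X i → K) (he : ∀ i, e i (x₀ i) = 1) (M : K) :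
    (∏ i, (card (X i) : K))⁻¹ *
        ∑ f : ∀ i, X i, (∏ i, e i (f i)) * (M - ∑ i, if f i = x₀ i then 0 else (card (X i) : K)) =
      (M - ∑ i, (card (X i) : K)) * ((∏ i, (card (X i) : K))⁻¹ * ∑ f : ∀ i, X i, ∏ i, e i (f i)) +
        ∑ j, ∏ i ∈ univ.erase j, (card (X i) : K)⁻¹ * ∑ x, e i x := by
  have hprod (j : ι) :
      (∏ i, (card (X i) : K))⁻¹ * (card (X j) * ∏ i ∈ univ.erase j, ∑ x, e i x) =
        ∏ i ∈ univ.erase j, (card (X i) : K)⁻¹ * ∑ x, e i x := by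
    have hj : (card (X j) : K) ≠ 0 :=
      Nat.cast_ne_zero.mpr (Fintype.card_pos_iff.mpr ⟨x₀ j⟩).ne'
    rw [← mul_prod_erase _ _ (mem_univ j), Finset.prod_mul_distrib, Finset.prod_inv_distrib]
    field_simp
  rw [Fintype.sum_pi_prod_mul_sub_sum_ite x₀ e he, mul_add, mul_left_comm,
    Finset.mul_sum univ (fun j => (card (X j) : K) * _)]
  simp only [hprod]

end SlicedSums

theorem finrank_cartSymClass_product_of_cyclic_groups_general
    (V : Type*) [NormedAddCommGroup V] [InnerProductSpace ℂ V] [FiniteDimensional ℂ V]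
    {m k : ℕ}
    (σ : Fin k → Equiv.Perm (Fin m)) (hcyc : ∀ ℓ, (σ ℓ).IsCycle)
    (hdisj : ∀ ℓ ℓ', ℓ ≠ ℓ' → (σ ℓ).Disjoint (σ ℓ'))
    (mi : Fin k → ℕ) (hmi : ∀ ℓ, orderOf (σ ℓ) = mi ℓ)
    (q : Fin k → ℕ)
    (χ : ↥(⨆ ℓ, Subgroup.zpowers (σ ℓ)) → ℂ)
    (hχ : ∀ (g : ↥(⨆ ℓ, Subgroup.zpowers (σ ℓ))) (j : Fin k → ℕ),
      (g : Equiv.Perm (Fin m)) = (List.ofFn fun ℓ => σ ℓ ^ j ℓ).prod →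
      χ g = ∏ ℓ, Complex.exp (2 * Real.pi * Complex.I * q ℓ * j ℓ / mi ℓ)) :
    (Module.finrank ℂ
        (LinearMap.range (cartSym V m (⨆ ℓ, Subgroup.zpowers (σ ℓ)) χ)) : ℂ) =
      (Module.finrank ℂ V : ℂ) *
        (((m : ℂ) - ∑ ℓ, (mi ℓ : ℂ)) *
            ((Nat.card (⨆ ℓ, Subgroup.zpowers (σ ℓ) : Subgroup (Equiv.Perm (Fin m))) : ℂ)⁻¹ *
              ∑ g : ↥(⨆ ℓ, Subgroup.zpowers (σ ℓ)), χ g) +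
          ∑ j : Fin k, ∏ ℓ ∈ Finset.univ.erase j,
            (mi ℓ : ℂ)⁻¹ * ∑ d ∈ (mi ℓ).divisors, ramanujanSum (mi ℓ / d) (q ℓ)) := by
  have (ℓ : Fin k) : NeZero (mi ℓ) := ⟨hmi ℓ ▸ (orderOf_pos (σ ℓ)).ne'⟩
  let E := disjointPowEquiv hdisj hmi hcyc
  let ψ (ℓ : Fin k) (x : Multiplicative (ZMod (mi ℓ))) : ℂ :=
    ZMod.stdAddChar ((q ℓ : ZMod (mi ℓ)) * x.toAdd)
  have hχE (f : ∀ ℓ, Multiplicative (ZMod (mi ℓ))) : χ (E f) = ∏ ℓ, ψ ℓ (f ℓ) := by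
    rw [hχ (E f) _ (disjointPowHom_apply_eq_prod_ofFn hdisj hmi f)]
    simp only [ψ, ← ZMod.stdAddChar_natCast_mul_natCast, ZMod.natCast_zmod_val]
  have hχ1 : χ 1 = 1 := by simpa [ψ] using hχE 1
  have hχmul (a b : ↥(⨆ ℓ, Subgroup.zpowers (σ ℓ))) : χ (a * b) = χ a * χ b := by
    obtain ⟨f, rfl⟩ := E.surjective a
    obtain ⟨g, rfl⟩ := E.surjective b
    simp only [← map_mul, hχE, ← Finset.prod_mul_distrib, ψ, Pi.mul_apply, toAdd_mul, mul_add,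
      AddChar.map_add_eq_mul]
  have hsupp (f : ∀ ℓ, Multiplicative (ZMod (mi ℓ))) :
      (E f : Equiv.Perm (Fin m)).support.card = ∑ ℓ, if f ℓ = 1 then 0 else mi ℓ :=
    card_support_disjointPowHom hdisj hmi hcyc f
  have hψ (ℓ : Fin k) : ∑ x, ψ ℓ x = ∑ d ∈ (mi ℓ).divisors, ramanujanSum (mi ℓ / d) (q ℓ) :=
    (Fintype.sum_equiv Multiplicative.toAdd _ _ fun _ => rfl).trans
      (ZMod.sum_stdAddChar_natCast_mul (mi ℓ) (q ℓ))
  have havg := Fintype.inv_prod_card_mul_sum_pi_prod_mul_sub_sum_ite (fun _ => 1) ψ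
    (by simp [ψ]) (m : ℂ)
  simp only [Fintype.card_multiplicative, ZMod.card] at havg
  rw [finrank_range_cartSym m _ χ hχ1 hχmul, card_iSup_zpowers_of_disjoint hdisj hmi hcyc,
    ← E.bijective.sum_comp, ← E.bijective.sum_comp χ]
  simp only [hχE, hsupp, ← hψ]
  push_cast
  rw [havg]

/-- for `G = ⟨σ₁⟩⟨σ₂⟩⋯⟨σ_k⟩` (`k ≥ 2`, `σ_ℓ` disjoint cycles of orders
`m_ℓ`) and `λ = λ_{q₁}⋯λ_{q_k}`,
`dim V^λ(G) = (dim V)·[(m − Σ m_ℓ)·[λ,1_G] + Σ_j Π_{ℓ≠j} (1/m_ℓ) Σ_{d∣m_ℓ} c_{m_ℓ/d}(q_ℓ)]`. -/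
theorem finrank_cartSymClass_product_of_cyclic_groups
    (V : Type*) [NormedAddCommGroup V] [InnerProductSpace ℂ V] [FiniteDimensional ℂ V]
    {m k : ℕ} (hk : 2 ≤ k)
    (σ : Fin k → Equiv.Perm (Fin m)) (hcyc : ∀ ℓ, (σ ℓ).IsCycle)
    (hdisj : ∀ ℓ ℓ', ℓ ≠ ℓ' → (σ ℓ).Disjoint (σ ℓ'))
    (mi : Fin k → ℕ) (hmi : ∀ ℓ, orderOf (σ ℓ) = mi ℓ)
    (q : Fin k → ℕ) (hq : ∀ ℓ, q ℓ < mi ℓ)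
    (χ : ↥(⨆ ℓ, Subgroup.zpowers (σ ℓ)) → ℂ)
    (hχ : ∀ (g : ↥(⨆ ℓ, Subgroup.zpowers (σ ℓ))) (j : Fin k → ℕ),
      (g : Equiv.Perm (Fin m)) = (List.ofFn fun ℓ => σ ℓ ^ j ℓ).prod →
      χ g = ∏ ℓ, Complex.exp (2 * Real.pi * Complex.I * q ℓ * j ℓ / mi ℓ)) :
    (Module.finrank ℂ
        (LinearMap.range (cartSym V m (⨆ ℓ, Subgroup.zpowers (σ ℓ)) χ)) : ℂ) =
      (Module.finrank ℂ V : ℂ) *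
        (((m : ℂ) - ∑ ℓ, (mi ℓ : ℂ)) *
            ((Nat.card (⨆ ℓ, Subgroup.zpowers (σ ℓ) : Subgroup (Equiv.Perm (Fin m))) : ℂ)⁻¹ *
              ∑ g : ↥(⨆ ℓ, Subgroup.zpowers (σ ℓ)), χ g) +
          ∑ j : Fin k, ∏ ℓ ∈ Finset.univ.erase j,
            (mi ℓ : ℂ)⁻¹ * ∑ d ∈ (mi ℓ).divisors, ramanujanSum (mi ℓ / d) (q ℓ)) :=
  finrank_cartSymClass_product_of_cyclic_groups_general V σ hcyc hdisj mi hmi q χ hχ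
end

section
/- Let G = D_{2m} ≤ S_m (m ≥ 3, n = dim V ≥ 2). For each degree-2 irreducible character ψ_h (0 < h < m/2) of D_{2m}, dim V^{ψ_h}(G) = 2n; for the trivial character dim is n; and for the linear character λ_2 with λ_2(r^k)=1, λ_2(sr^k)=−1, the dimension is 0. -/
open scoped Classical InnerProductSpace ComplexConjugate

/-- The dihedral group `D_{2m} ≤ S_m`, generated by the `m`-cycle `r` and the
reflection `s = (x ↦ -x)` fixing the first point. -/
def dihedralG (m : ℕ) [NeZero m] : Subgroup (Equiv.Perm (Fin m)) :=
  Subgroup.closure {finRotate m, (Equiv.neg (Fin m) : Equiv.Perm (Fin m))}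

/-- The reflection `s` as an element of `D_{2m}`. -/
def sElt (m : ℕ) [NeZero m] : ↥(dihedralG m) :=
  ⟨(Equiv.neg (Fin m) : Equiv.Perm (Fin m)), Subgroup.subset_closure (by simp)⟩

/-!
Every element of `D_{2m}` is a rotation `x ↦ x + a` or a reflection `x ↦ -(x + a)` of `Fin m`,
so the symmetrizer of a character `χ` of `D_{2m}` acts on `×^m V` by two convolutions, one over
`i - a` and one over `-i - a`. Convolving with an additive character `φ` of `Fin m` is
`m • e_φ ∘ c_φ`, where `c_φ u = m⁻¹ Σ_j φ(-j) u_j` and `e_φ v = (φ(i) v)_i`, and orthogonality of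
characters gives `c_φ ∘ e_φ' = δ_{φφ'}`. For the trivial character the symmetrizer is `e_1 ∘ c_1`,
of rank `n`; for `λ₂` the two convolutions cancel; and `ψ_h(r^a) = ζ^a + ζ^{-a}` with
`ζ = e^{2πih/m}`, `ζ² ≠ 1`, so the symmetrizer is `(e_ζ, e_{ζ⁻¹}) ∘ (c_ζ, c_{ζ⁻¹})`, of rank `2n`.
-/

open scoped Fin.CommRing
open Equiv

namespace dihedralG

variable {m : ℕ} [NeZero m]

lemma finRotate_pow (k : ℕ) : finRotate m ^ k = Equiv.addRight (k : Fin m) := by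
  have : finRotate m = Equiv.addRight 1 := by ext x; simp [finRotate_apply]
  rw [this, Equiv.nsmul_addRight, nsmul_one]

lemma addRight_mem (a : Fin m) : Equiv.addRight a ∈ dihedralG m := by
  rw [← Fin.cast_val_eq_self a, ← finRotate_pow]
  exact pow_mem (Subgroup.subset_closure (by simp)) _

lemma neg_mul_addRight_mem (a : Fin m) : Equiv.neg (Fin m) * Equiv.addRight a ∈ dihedralG m :=
  mul_mem (Subgroup.subset_closure (by simp)) (addRight_mem a)

-- `r a = r^a` and `sr a = s r^a` in the notation of `D_{2m}`.
def r (a : Fin m) : dihedralG m := ⟨Equiv.addRight a, addRight_mem a⟩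

def sr (a : Fin m) : dihedralG m := ⟨Equiv.neg (Fin m) * Equiv.addRight a, neg_mul_addRight_mem a⟩

lemma r_zero : r (0 : Fin m) = 1 := Subtype.ext Equiv.addRight_zero

lemma r_ne_sr (hm : 3 ≤ m) (a b : Fin m) : r a ≠ sr b := by
  intro h
  have h0 := DFunLike.congr_fun (congrArg Subtype.val h) 0
  have h1 := DFunLike.congr_fun (congrArg Subtype.val h) 1
  simp only [r, coe_addRight, zero_add, sr, Perm.mul_apply, Equiv.neg_apply, neg_add_rev] at h0 h1
  have two : (2 : Fin m).val = 0 := by rw [show (2 : Fin m) = 0 by linear_combination h1 - h0]; rfl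
  rw [Fin.coe_ofNat_eq_mod, Nat.mod_eq_of_lt (by omega)] at two
  omega

lemma exists_r_or_sr (g : dihedralG m) : (∃ a, g = r a) ∨ ∃ a, g = sr a := by
  suffices ∀ τ ∈ dihedralG m,
      (∃ a, τ = Equiv.addRight a) ∨ ∃ a, τ = Equiv.neg (Fin m) * Equiv.addRight a by
    rcases this g g.2 with ⟨a, ha⟩ | ⟨a, ha⟩
    exacts [Or.inl ⟨a, Subtype.ext ha⟩, Or.inr ⟨a, Subtype.ext ha⟩]
  intro τ hτ
  induction hτ using Subgroup.closure_induction with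
  | mem τ hτ =>
    rcases hτ with rfl | rfl
    · exact Or.inl ⟨1, by ext x; simp [finRotate_apply]⟩
    · exact Or.inr ⟨0, by simp⟩
  | one => exact Or.inl ⟨0, by simp⟩
  | mul τ τ' _ _ hτ hτ' =>
    rcases hτ with ⟨a, rfl⟩ | ⟨a, rfl⟩ <;> rcases hτ' with ⟨b, rfl⟩ | ⟨b, rfl⟩
    · exact Or.inl ⟨b + a, (Equiv.addRight_add b a).symm⟩
    · refine Or.inr ⟨b - a, Equiv.ext fun x => ?_⟩
      simp only [Perm.mul_apply, coe_addRight, Equiv.neg_apply, neg_add_rev, neg_sub]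
      abel
    · refine Or.inr ⟨a + b, Equiv.ext fun x => ?_⟩
      simp only [Perm.mul_apply, coe_addRight, Equiv.neg_apply, neg_add_rev, addRight_add]
      abel
    · refine Or.inl ⟨b - a, Equiv.ext fun x => ?_⟩
      simp only [Perm.mul_apply, coe_addRight, Equiv.neg_apply, neg_add_rev, neg_neg]
      abel
  | inv τ _ hτ =>
    rcases hτ with ⟨a, rfl⟩ | ⟨a, rfl⟩
    · exact Or.inl ⟨-a, by ext x; simp⟩
    · exact Or.inr ⟨a, by rw [inv_eq_iff_mul_eq_one]; ext x; simp [Perm.mul_apply]⟩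

noncomputable def sumEquiv (hm : 3 ≤ m) : Fin m ⊕ Fin m ≃ dihedralG m :=
  Equiv.ofBijective (Sum.elim r sr) <| by
    refine ⟨?_, fun g => ?_⟩
    · rintro (a | a) (b | b) h
      · simpa [r] using DFunLike.congr_fun (congrArg Subtype.val h) 0
      · exact absurd h (r_ne_sr hm a b)
      · exact absurd h.symm (r_ne_sr hm b a)
      · have h0 := DFunLike.congr_fun (congrArg Subtype.val h) 0
        simpa [sr, Perm.mul_apply] using h0
    · rcases exists_r_or_sr g with ⟨a, rfl⟩ | ⟨a, rfl⟩
      exacts [⟨Sum.inl a, rfl⟩, ⟨Sum.inr a, rfl⟩]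

lemma sum_eq_sum_r_add_sum_sr {M : Type*} [AddCommMonoid M] (hm : 3 ≤ m) (F : dihedralG m → M) :
    ∑ g, F g = ∑ a, F (r a) + ∑ a, F (sr a) := by
  rw [← (sumEquiv hm).sum_comp, Fintype.sum_sum_type]
  rfl

lemma natCard_eq_two_mul (hm : 3 ≤ m) : Nat.card (dihedralG m) = 2 * m := by
  rw [← Nat.card_congr (sumEquiv hm), Nat.card_sum, Nat.card_eq_fintype_card, Fintype.card_fin,
    two_mul]

lemma coe_r (a : Fin m) : (r a : Perm (Fin m)) = finRotate m ^ a.val := by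
  rw [finRotate_pow, Fin.cast_val_eq_self]
  rfl

lemma coe_sr (a : Fin m) : (sr a : Perm (Fin m)) = Equiv.neg (Fin m) * finRotate m ^ a.val := by
  rw [finRotate_pow, Fin.cast_val_eq_self]
  rfl

lemma r_symm_apply (a i : Fin m) : (r a : Perm (Fin m)).symm i = i - a := by
  simp [r, sub_eq_add_neg]

lemma sr_symm_apply (a i : Fin m) : (sr a : Perm (Fin m)).symm i = -i - a := by
  rw [Equiv.symm_apply_eq]
  simp [sr, Perm.mul_apply]

end dihedralG

section CharacterComponents

variable {K A : Type*} [Field K] [AddCommGroup A] (V : Type*) [AddCommGroup V] [Module K V]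

def charEmbed (χ : AddChar A K) : V →ₗ[K] PiLp 2 (fun _ : A => V) where
  toFun v := WithLp.toLp 2 fun a => χ a • v
  map_add' _ _ := PiLp.ext fun _ => smul_add _ _ _
  map_smul' _ _ := PiLp.ext fun _ => smul_comm _ _ _

@[simp]
lemma charEmbed_apply (χ : AddChar A K) (v : V) (a : A) : charEmbed V χ v a = χ a • v := rfl

variable [Fintype A]

def charCoeff (χ : AddChar A K) : PiLp 2 (fun _ : A => V) →ₗ[K] V where
  toFun u := (Fintype.card A : K)⁻¹ • ∑ a, χ (-a) • u a
  map_add' u w := by simp only [WithLp.ofLp_add, Pi.add_apply, smul_add, Finset.sum_add_distrib]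
  map_smul' c u := by
    simp only [WithLp.ofLp_smul, Pi.smul_apply, Finset.smul_sum, smul_comm c, RingHom.id_apply]

lemma charCoeff_apply (χ : AddChar A K) (u : PiLp 2 (fun _ : A => V)) :
    charCoeff V χ u = (Fintype.card A : K)⁻¹ • ∑ a, χ (-a) • u a := rfl

variable {V} [CharZero K]

lemma charCoeff_charEmbed (χ ψ : AddChar A K) (v : V) :
    charCoeff V χ (charEmbed V ψ v) = if χ = ψ then v else 0 := by
  have hcard : (Fintype.card A : K) ≠ 0 := Nat.cast_ne_zero.2 Fintype.card_ne_zero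
  have hsum : ∑ a, χ (-a) * ψ a = ∑ a, (ψ * χ⁻¹) a := by simp [mul_comm]
  simp_rw [charCoeff_apply, charEmbed_apply, smul_smul, ← Finset.sum_smul, hsum,
    AddChar.sum_eq_ite, ← AddChar.one_eq_zero, mul_inv_eq_one, eq_comm (a := ψ)]
  split_ifs <;> simp [hcard]

lemma charCoeff_comp_charEmbed (χ : AddChar A K) :
    charCoeff V χ ∘ₗ charEmbed V χ = LinearMap.id :=
  LinearMap.ext fun v => by simp [charCoeff_charEmbed]

lemma charCoeff_prod_comp_charEmbed_coprod {χ ψ : AddChar A K} (h : χ ≠ ψ) :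
    (charCoeff V χ).prod (charCoeff V ψ) ∘ₗ (charEmbed V χ).coprod (charEmbed V ψ) =
      LinearMap.id := by
  apply LinearMap.prod_ext <;> ext v <;> simp [charCoeff_charEmbed, h, h.symm]

lemma sum_addChar_smul_sub (χ : AddChar A K) (u : PiLp 2 (fun _ : A => V)) (i : A) :
    ∑ a, χ a • u (i - a) = (Fintype.card A : K) • charEmbed V χ (charCoeff V χ u) i := by
  have hcard : (Fintype.card A : K) ≠ 0 := Nat.cast_ne_zero.2 Fintype.card_ne_zero
  rw [charEmbed_apply, charCoeff_apply, smul_comm, smul_smul, smul_smul,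
    mul_inv_cancel_right₀ hcard, Finset.smul_sum, ← (Equiv.subLeft i).sum_comp]
  refine Fintype.sum_congr _ _ fun a => ?_
  simp [smul_smul, ← AddChar.map_add_eq_mul, sub_eq_add_neg]

end CharacterComponents

lemma LinearMap.finrank_range_comp_of_comp_eq_id {R M W : Type*} [Semiring R]
    [AddCommMonoid M] [Module R M] [AddCommMonoid W] [Module R W]
    (g : W →ₗ[R] M) (p : M →ₗ[R] W) (h : p ∘ₗ g = LinearMap.id) :
    Module.finrank R (LinearMap.range (g ∘ₗ p)) = Module.finrank R W := by
  have hpg : Function.LeftInverse p g := LinearMap.congr_fun h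
  rw [LinearMap.range_comp_of_range_eq_top g (LinearMap.range_eq_top.2 hpg.surjective),
    LinearMap.finrank_range_of_inj hpg.injective]

section CartSymDihedral

open dihedralG

variable (V : Type*) [NormedAddCommGroup V] [InnerProductSpace ℂ V] {m : ℕ} [NeZero m]

lemma cartSym_dihedralG_apply (hm : 3 ≤ m) (χ : dihedralG m → ℂ) (u : CartPow V m) (i : Fin m) :
    cartSym V m (dihedralG m) χ u i =
      (χ 1 / (2 * m)) • (∑ a, χ (r a) • u (i - a) + ∑ a, χ (sr a) • u (-i - a)) := by
  simp only [cartSym, natCard_eq_two_mul hm, LinearMap.smul_apply, LinearMap.sum_apply,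
    PiLp.smul_apply, WithLp.ofLp_sum, Finset.sum_apply]
  rw [sum_eq_sum_r_add_sum_sr hm]
  simp [CartQ, r_symm_apply, sr_symm_apply]

lemma cartSym_dihedralG_of_r_eq_one (hm : 3 ≤ m) (χ : dihedralG m → ℂ) (ε : ℂ)
    (hr : ∀ a, χ (r a) = 1) (hsr : ∀ a, χ (sr a) = ε) :
    cartSym V m (dihedralG m) χ = ((1 + ε) / 2) • (charEmbed V 1 ∘ₗ charCoeff V 1) := by
  have hm0 : (m : ℂ) ≠ 0 := Nat.cast_ne_zero.2 (NeZero.ne m)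
  have hsum (u : CartPow V m) (j : Fin m) :
      ∑ a, u (j - a) = (m : ℂ) • charCoeff V (1 : AddChar (Fin m) ℂ) u := by
    simpa using sum_addChar_smul_sub (1 : AddChar (Fin m) ℂ) u j
  ext u i
  simp only [cartSym_dihedralG_apply V hm, ← r_zero, hr, hsr, one_smul, ← Finset.smul_sum, hsum]
  simp only [LinearMap.smul_apply, LinearMap.comp_apply, PiLp.smul_apply, charEmbed_apply,
    AddChar.one_apply, one_smul]
  match_scalars
  field_simp

lemma cartSym_dihedralG_of_addChar (hm : 3 ≤ m) (ψ : dihedralG m → ℂ) (χ : AddChar (Fin m) ℂ)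
    (hr : ∀ a, ψ (r a) = χ a + χ⁻¹ a) (hsr : ∀ a, ψ (sr a) = 0) :
    cartSym V m (dihedralG m) ψ =
      (charEmbed V χ).coprod (charEmbed V χ⁻¹) ∘ₗ (charCoeff V χ).prod (charCoeff V χ⁻¹) := by
  have hm0 : (m : ℂ) ≠ 0 := Nat.cast_ne_zero.2 (NeZero.ne m)
  ext u i
  simp only [cartSym_dihedralG_apply V hm, ← r_zero, hr, hsr, zero_smul, Finset.sum_const_zero,
    add_zero, add_smul, Finset.sum_add_distrib, sum_addChar_smul_sub]
  simp only [AddChar.map_zero_eq_one, one_add_one_eq_two, Fintype.card_fin, LinearMap.comp_apply,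
    LinearMap.prod_apply, Function.prod_apply, LinearMap.coprod_apply, PiLp.add_apply]
  match_scalars <;> field_simp

lemma finrank_range_cartSym_dihedralG_of_addChar [FiniteDimensional ℂ V] (hm : 3 ≤ m)
    (ψ : dihedralG m → ℂ) (χ : AddChar (Fin m) ℂ) (hχ : χ ≠ χ⁻¹)
    (hr : ∀ a, ψ (r a) = χ a + χ⁻¹ a) (hsr : ∀ a, ψ (sr a) = 0) :
    Module.finrank ℂ (LinearMap.range (cartSym V m (dihedralG m) ψ)) = 2 * Module.finrank ℂ V := by
  rw [cartSym_dihedralG_of_addChar V hm ψ χ hr hsr,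
    LinearMap.finrank_range_comp_of_comp_eq_id _ _ (charCoeff_prod_comp_charEmbed_coprod hχ),
    Module.finrank_prod, two_mul]

end CartSymDihedral

section PowAddChar

variable {m : ℕ} [NeZero m] {M : Type*} [CommMonoid M] {ζ : M}

def powAddChar (hζ : ζ ^ m = 1) : AddChar (Fin m) M where
  toFun a := ζ ^ a.val
  map_zero_eq_one' := by simp
  map_add_eq_mul' a b := by rw [Fin.val_add, ← pow_eq_pow_mod _ hζ, pow_add]

lemma powAddChar_apply (hζ : ζ ^ m = 1) (a : Fin m) : powAddChar hζ a = ζ ^ a.val := rfl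

lemma powAddChar_natCast (hζ : ζ ^ m = 1) (k : ℕ) : powAddChar hζ k = ζ ^ k := by
  rw [powAddChar_apply, Fin.val_natCast, ← pow_eq_pow_mod _ hζ]

end PowAddChar

open Real in
lemma ofReal_two_cos_eq (m h k : ℕ) :
    ((2 * cos (2 * π * k * h / m) : ℝ) : ℂ) =
      (Complex.exp (2 * π * Complex.I / m) ^ h) ^ k +
        ((Complex.exp (2 * π * Complex.I / m) ^ h) ^ k)⁻¹ := by
  push_cast
  rw [Complex.two_cos, ← pow_mul, ← Complex.exp_nat_mul, ← Complex.exp_neg]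
  congr 2 <;> push_cast <;> ring

lemma exists_addChar_add_inv_eq_two_cos {m : ℕ} [NeZero m] (h : ℕ) (h0 : 0 < h) (h2 : 2 * h < m) :
    ∃ χ : AddChar (Fin m) ℂ, χ ≠ χ⁻¹ ∧
      ∀ a : Fin m, χ a + χ⁻¹ a = ((2 * Real.cos (2 * Real.pi * a.val * h / m) : ℝ) : ℂ) := by
  set ω := Complex.exp (2 * Real.pi * Complex.I / m)
  have hω : IsPrimitiveRoot ω m := Complex.isPrimitiveRoot_exp m (NeZero.ne m)
  have hζ : (ω ^ h) ^ m = 1 := by rw [← pow_mul, mul_comm, pow_mul, hω.pow_eq_one, one_pow]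
  refine ⟨powAddChar hζ, fun he => ?_, fun a => ?_⟩
  -- `χ = χ⁻¹` at `1` says `ω ^ (h + h) = 1`, i.e. `m ∣ 2 * h`.
  · have h1 := DFunLike.congr_fun he ((1 : ℕ) : Fin m)
    rw [AddChar.inv_apply', powAddChar_natCast, pow_one,
      ← mul_eq_one_iff_eq_inv₀ (pow_ne_zero _ (Complex.exp_ne_zero _)), ← pow_add,
      hω.pow_eq_one_iff_dvd] at h1
    have := Nat.le_of_dvd (by omega) h1
    omega
  · rw [ofReal_two_cos_eq, AddChar.inv_apply', powAddChar_apply]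

theorem finrank_cartSymClass_dihedral_characters_general
    (V : Type*) [NormedAddCommGroup V] [InnerProductSpace ℂ V] [FiniteDimensional ℂ V]
    (m : ℕ) [NeZero m] (hm : 3 ≤ m) :
    (∀ (h : ℕ), 0 < h → 2 * h < m → ∀ ψ : ↥(dihedralG m) → ℂ,
      (∀ (g : ↥(dihedralG m)) (k : ℕ),
        ((g : Equiv.Perm (Fin m)) = (finRotate m) ^ k →
          ψ g = ((2 * Real.cos (2 * Real.pi * k * h / m) : ℝ) : ℂ)) ∧
        ((g : Equiv.Perm (Fin m)) =
            (Equiv.neg (Fin m) : Equiv.Perm (Fin m)) * (finRotate m) ^ k → ψ g = 0)) →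
      Module.finrank ℂ (LinearMap.range (cartSym V m (dihedralG m) ψ)) =
        2 * Module.finrank ℂ V) ∧
    (Module.finrank ℂ (LinearMap.range (cartSym V m (dihedralG m) (fun _ => (1 : ℂ)))) =
      Module.finrank ℂ V) ∧
    (∀ χ₂ : ↥(dihedralG m) → ℂ,
      (∀ (g : ↥(dihedralG m)) (k : ℕ),
        ((g : Equiv.Perm (Fin m)) = (finRotate m) ^ k → χ₂ g = 1) ∧
        ((g : Equiv.Perm (Fin m)) =
            (Equiv.neg (Fin m) : Equiv.Perm (Fin m)) * (finRotate m) ^ k → χ₂ g = -1)) →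
      Module.finrank ℂ (LinearMap.range (cartSym V m (dihedralG m) χ₂)) = 0) := by
  open dihedralG in
  refine ⟨fun h h0 h2 ψ hψ => ?_, ?_, fun χ₂ hχ₂ => ?_⟩
  · obtain ⟨χ, hχ, hcos⟩ := exists_addChar_add_inv_eq_two_cos h h0 h2
    refine finrank_range_cartSym_dihedralG_of_addChar V hm ψ χ hχ (fun a => ?_)
      (fun a => (hψ (sr a) a.val).2 (coe_sr a))
    rw [hcos, (hψ (r a) a.val).1 (coe_r a)]
  · rw [cartSym_dihedralG_of_r_eq_one V hm _ 1 (fun _ => rfl) (fun _ => rfl), one_add_one_eq_two,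
      div_self two_ne_zero, one_smul,
      LinearMap.finrank_range_comp_of_comp_eq_id _ _ (charCoeff_comp_charEmbed 1)]
  · rw [cartSym_dihedralG_of_r_eq_one V hm χ₂ (-1) (fun a => (hχ₂ (r a) a.val).1 (coe_r a))
      (fun a => (hχ₂ (sr a) a.val).2 (coe_sr a)), add_neg_cancel, zero_div, zero_smul,
      LinearMap.range_zero, finrank_bot]

/-- dimensions of the Cartesian symmetry classes of `D_{2m} ≤ S_m`
(`m ≥ 3`, `n = dim V ≥ 2`): `2n` for each degree-2 character `ψ_h` (`0 < h < m/2`),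
`n` for the trivial character, and `0` for the linear character `λ₂` with
`λ₂(r^k) = 1`, `λ₂(sr^k) = -1`. -/
theorem finrank_cartSymClass_dihedral_characters
    (V : Type*) [NormedAddCommGroup V] [InnerProductSpace ℂ V] [FiniteDimensional ℂ V]
    (m : ℕ) [NeZero m] (hm : 3 ≤ m) (hn : 2 ≤ Module.finrank ℂ V) :
    (∀ (h : ℕ), 0 < h → 2 * h < m → ∀ ψ : ↥(dihedralG m) → ℂ,
      (∀ (g : ↥(dihedralG m)) (k : ℕ),
        ((g : Equiv.Perm (Fin m)) = (finRotate m) ^ k →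
          ψ g = ((2 * Real.cos (2 * Real.pi * k * h / m) : ℝ) : ℂ)) ∧
        ((g : Equiv.Perm (Fin m)) =
            (Equiv.neg (Fin m) : Equiv.Perm (Fin m)) * (finRotate m) ^ k → ψ g = 0)) →
      Module.finrank ℂ (LinearMap.range (cartSym V m (dihedralG m) ψ)) =
        2 * Module.finrank ℂ V) ∧
    (Module.finrank ℂ (LinearMap.range (cartSym V m (dihedralG m) (fun _ => (1 : ℂ)))) =
      Module.finrank ℂ V) ∧
    (∀ χ₂ : ↥(dihedralG m) → ℂ,
      (∀ (g : ↥(dihedralG m)) (k : ℕ),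
        ((g : Equiv.Perm (Fin m)) = (finRotate m) ^ k → χ₂ g = 1) ∧
        ((g : Equiv.Perm (Fin m)) =
            (Equiv.neg (Fin m) : Equiv.Perm (Fin m)) * (finRotate m) ^ k → χ₂ g = -1)) →
      Module.finrank ℂ (LinearMap.range (cartSym V m (dihedralG m) χ₂)) = 0) :=
  finrank_cartSymClass_dihedral_characters_general V m hm
end
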